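/- arXiv:2409.19477 — 6 statements merged into one kernel-verified Lean document; each statement's English description precedes it below -/
import Mathlib

section
/- Suppose m, p, ε satisfy Condition 1. Then for every outcome vector y ∈ {0,1}^m with ‖y‖₁ ≤ p*·m and every report vector r_j ∈ [0,1]^m with ‖r_j − c‖₂ < ε·√m, it holds that ‖r* − y‖₂ < ‖r_j − y‖₂ − 2. -/
noncomputable section

/-- The Euclidean (ℓ²) norm of a vector in ℝ^m. -/
def l2norm {m : ℕ} (v : Fin m → ℝ) : ℝ := Real.sqrt (∑ t, v t ^ 2)

/-- The hedged probability `p* = (1/2 + p)/2`. -/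
def pstar (p : ℝ) : ℝ := (1 / 2 + p) / 2

/-- Condition 1 of the paper on `(m, p, ε)`. -/
def Cond1 (m : ℕ) (p ε : ℝ) : Prop :=
  21 ≤ m ∧
  (0 < p ∧ p < 1 / 2 - 2 * Real.sqrt ((2 / Real.sqrt m) * (1 - 2 / Real.sqrt m))) ∧
  (0 < ε ∧ ε < 1 / 2 - Real.sqrt (pstar p * (1 - pstar p)) - 2 / Real.sqrt m)

lemma l2norm_eq_norm {m : ℕ} (v : Fin m → ℝ) :
    l2norm v = ‖(WithLp.equiv 2 (Fin m → ℝ)).symm v‖ := by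
  rw [EuclideanSpace.norm_eq]
  simp [l2norm, Real.norm_eq_abs, sq_abs]

/-- **Lemma 1 (lower inequality).** If `(m, p, ε)` satisfy Condition 1, then for every binary
outcome vector `y` with `‖y‖₁ ≤ p* m` and every report `r_j ∈ [0,1]^m` with
`‖r_j - c‖₂ < ε √m` (where `c = (1/2, …, 1/2)`), the hedged report `r* = (p*, …, p*)`
satisfies `‖r* - y‖₂ < ‖r_j - y‖₂ - 2`. -/
theorem hedging_lower_ineq (m : ℕ) (p ε : ℝ) (hcond : Cond1 m p ε)
    (y : Fin m → ℝ) (hy : ∀ t, y t = 0 ∨ y t = 1)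
    (hy1 : ∑ t, y t ≤ pstar p * m)
    (rj : Fin m → ℝ) (hrj : ∀ t, rj t ∈ Set.Icc (0 : ℝ) 1)
    (hclose : l2norm (fun t => rj t - 1 / 2) < ε * Real.sqrt m) :
    l2norm (fun t => pstar p - y t) < l2norm (fun t => rj t - y t) - 2 := by
  obtain ⟨hm, ⟨hp0, hp1⟩, hε0, hε1⟩ := hcond
  set P := pstar p with hPdef
  have hm0 : (0:ℝ) < m := by
    have : (21:ℝ) ≤ m := by exact_mod_cast hm
    linarith
  have hsm : 0 < Real.sqrt m := Real.sqrt_pos.mpr hm0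
  have hP0 : 0 < P := by simp only [hPdef, pstar]; linarith
  have hPhalf : P < 1/2 := by
    have h0 : 0 ≤ Real.sqrt ((2 / Real.sqrt m) * (1 - 2 / Real.sqrt m)) := Real.sqrt_nonneg _
    simp only [hPdef, pstar]; linarith
  have hS0 : 0 ≤ ∑ t, y t :=
    Finset.sum_nonneg fun t _ => by rcases hy t with h | h <;> simp [h]
  -- sum computation for r* - y
  have hsumA : ∑ t, (P - y t)^2 = m * P^2 + (∑ t, y t) * (1 - 2*P) := by
    have h1 : ∀ t, (P - y t)^2 = P^2 + (1 - 2*P) * y t := by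
      intro t; rcases hy t with h | h <;> simp [h] <;> ring
    rw [Finset.sum_congr rfl fun t _ => h1 t]
    rw [Finset.sum_add_distrib, Finset.sum_const, ← Finset.mul_sum]
    simp [Finset.card_fin]
    ring
  have hA : l2norm (fun t => P - y t) ≤ Real.sqrt m * Real.sqrt (P*(1-P)) := by
    rw [l2norm, ← Real.sqrt_mul hm0.le]
    apply Real.sqrt_le_sqrt
    rw [hsumA]
    nlinarith [hy1, hPhalf, hS0]
  -- l2norm of c - y
  have hB : l2norm (fun t => (1:ℝ)/2 - y t) = Real.sqrt m / 2 := by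
    have h1 : ∀ t, ((1:ℝ)/2 - y t)^2 = 1/4 := by
      intro t; rcases hy t with h | h <;> norm_num [h]
    rw [l2norm, Finset.sum_congr rfl fun t _ => h1 t, Finset.sum_const, Finset.card_fin]
    rw [show ((m:ℕ) • ((1:ℝ)/4)) = (m:ℝ) * (1/2)^2 by push_cast; ring]
    rw [Real.sqrt_mul hm0.le, Real.sqrt_sq (by norm_num : (0:ℝ) ≤ 1/2)]
    ring
  -- triangle inequality
  have htri : l2norm (fun t => (1:ℝ)/2 - y t)
      ≤ l2norm (fun t => rj t - 1/2) + l2norm (fun t => rj t - y t) := by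
    rw [l2norm_eq_norm, l2norm_eq_norm, l2norm_eq_norm]
    have h1 : (WithLp.equiv 2 (Fin m → ℝ)).symm (fun t => (1:ℝ)/2 - y t)
        = ((WithLp.equiv 2 (Fin m → ℝ)).symm (fun t => rj t - y t))
          - ((WithLp.equiv 2 (Fin m → ℝ)).symm (fun t => rj t - 1/2)) := by
      ext t
      simp [PiLp.toLp_apply]
    rw [h1]
    calc ‖_ - _‖ ≤ _ + _ := norm_sub_le _ _
      _ = _ := add_comm _ _
  -- key arithmetic from Condition 1
  have hkey : Real.sqrt (P*(1-P)) < 1/2 - ε - 2/Real.sqrt m := by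
    simp only [hPdef] at *
    linarith
  have h2m : Real.sqrt m * (2 / Real.sqrt m) = 2 := by
    field_simp
  have hchain : Real.sqrt m * Real.sqrt (P*(1-P))
      < Real.sqrt m / 2 - ε * Real.sqrt m - 2 := by
    have heq : Real.sqrt m * (1/2 - ε - 2/Real.sqrt m)
        = Real.sqrt m / 2 - ε * Real.sqrt m - 2 := by
      rw [mul_sub, mul_sub, h2m]; ring
    linarith [mul_lt_mul_of_pos_left hkey hsm, heq]
  calc l2norm (fun t => P - y t) ≤ Real.sqrt m * Real.sqrt (P*(1-P)) := hA
    _ < Real.sqrt m / 2 - ε * Real.sqrt m - 2 := hchain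
    _ < l2norm (fun t => (1:ℝ)/2 - y t) - l2norm (fun t => rj t - 1/2) - 2 := by
        rw [hB]; linarith
    _ ≤ l2norm (fun t => rj t - y t) - 2 := by linarith

end
end

section
/- Suppose m, p, ε satisfy Condition 1. Then for every outcome vector y ∈ {0,1}^m with ‖y‖₁ ≥ p*·m and every report vector r_i ∈ [0,1]^m with ‖r_i − p̄‖₂ < ε·√m, it holds that ‖r* − y‖₂ < ‖r_i − y‖₂ − 2. -/
set_option maxHeartbeats 800000


noncomputable section

lemma l2norm_triangle {m : ℕ} (v w : Fin m → ℝ) :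
    l2norm (fun t => v t + w t) ≤ l2norm v + l2norm w := by
  have h : (fun t => v t + w t) = v + w := rfl
  rw [h, l2norm_eq_norm, l2norm_eq_norm, l2norm_eq_norm]
  rw [WithLp.equiv_symm_apply, WithLp.toLp_add]
  exact norm_add_le _ _

/-- **Lemma 2 (upper inequality).** If `(m, p, ε)` satisfy Condition 1, then for every binary
outcome vector `y` with `‖y‖₁ ≥ p* m` and every report `r_i ∈ [0,1]^m` with
`‖r_i - p̄‖₂ < ε √m` (where `p̄ = (p, …, p)`), the hedged report `r* = (p*, …, p*)`
satisfies `‖r* - y‖₂ < ‖r_i - y‖₂ - 2`. -/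
theorem hedging_upper_ineq (m : ℕ) (p ε : ℝ) (hcond : Cond1 m p ε)
    (y : Fin m → ℝ) (hy : ∀ t, y t = 0 ∨ y t = 1)
    (hy1 : pstar p * m ≤ ∑ t, y t)
    (ri : Fin m → ℝ) (hri : ∀ t, ri t ∈ Set.Icc (0 : ℝ) 1)
    (hclose : l2norm (fun t => ri t - p) < ε * Real.sqrt m) :
    l2norm (fun t => pstar p - y t) < l2norm (fun t => ri t - y t) - 2 := by
  obtain ⟨hm, ⟨hp0, hp1⟩, ⟨hε0, hε1⟩⟩ := hcond
  set q : ℝ := pstar p with hqdef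
  have hq : q = (1/2 + p)/2 := rfl
  have hp_half : p < 1/2 := by
    have := Real.sqrt_nonneg ((2 / Real.sqrt m) * (1 - 2 / Real.sqrt m))
    linarith
  have hq1 : 1/4 < q := by rw [hq]; linarith
  have hq2 : q < 1/2 := by rw [hq]; linarith
  set s : ℝ := Real.sqrt (q * (1 - q)) with hsdef
  have hs2 : s ^ 2 = q * (1 - q) := Real.sq_sqrt (by nlinarith)
  have hs0 : 0 ≤ s := Real.sqrt_nonneg _
  have hs_lb : 1/4 < s := by nlinarith
  have hs_ub : s ≤ 1/2 := by nlinarith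
  set C : ℝ := 1/2 - s with hCdef
  have hC0 : 0 ≤ C := by simp [hCdef]; linarith
  have hCs : C ≤ s := by rw [hCdef]; linarith
  set k : ℝ := ∑ t, y t with hkdef
  have hk : q * m ≤ k := hy1
  -- sums
  have hS1 : ∑ t, (q - y t) ^ 2 = m * q^2 + (1 - 2*q) * k := by
    have : ∀ t ∈ Finset.univ, (q - y t)^2 = q^2 + (1 - 2*q) * y t := by
      intro t _
      rcases hy t with h | h <;> rw [h] <;> ring
    rw [Finset.sum_congr rfl this, Finset.sum_add_distrib, ← Finset.mul_sum]
    simp [hkdef, Finset.card_univ]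
  have hS2 : ∑ t, (y t - p) ^ 2 = m * p^2 + (1 - 2*p) * k := by
    have : ∀ t ∈ Finset.univ, (y t - p)^2 = p^2 + (1 - 2*p) * y t := by
      intro t _
      rcases hy t with h | h <;> rw [h] <;> ring
    rw [Finset.sum_congr rfl this, Finset.sum_add_distrib, ← Finset.mul_sum]
    simp [hkdef, Finset.card_univ]
  set S1 : ℝ := ∑ t, (q - y t) ^ 2 with hS1def
  set S2 : ℝ := ∑ t, (y t - p) ^ 2 with hS2def
  have hS1nn : 0 ≤ S1 := Finset.sum_nonneg (fun t _ => sq_nonneg _)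
  have hS2nn : 0 ≤ S2 := Finset.sum_nonneg (fun t _ => sq_nonneg _)
  set u : ℝ := Real.sqrt S1 with hudef
  set v : ℝ := Real.sqrt m with hvdef
  have hu0 : 0 ≤ u := Real.sqrt_nonneg _
  have hv0 : 0 ≤ v := Real.sqrt_nonneg _
  have hu2 : u ^ 2 = S1 := Real.sq_sqrt hS1nn
  have hmpos : (0:ℝ) < m := by positivity
  have hv2 : v ^ 2 = m := Real.sq_sqrt (le_of_lt hmpos)
  have hvpos : 0 < v := Real.sqrt_pos.mpr hmpos
  -- key identity
  have hident : (s + C) * S1 + (C * s^2 + C^2 * s) * (m:ℝ)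
      + 2 * (q - p) * (2*s - 1/2) * (k - q * m) = s * S2 := by
    have hs2' : s^2 = ((1/2 + p)/2) * (1 - (1/2 + p)/2) := by rw [hs2, hq]
    rw [hS1, hS2, hCdef, hq]
    linear_combination (-(m:ℝ)/2) * hs2'
  have hmono : 0 ≤ 2 * (q - p) * (2*s - 1/2) * (k - q * m) := by
    apply mul_nonneg
    apply mul_nonneg
    · rw [hq]; linarith
    · linarith
    · linarith
  have h1 : 2 * s * (u * v) ≤ u^2 + s^2 * v^2 := by nlinarith [sq_nonneg (u - s * v)]
  have hkey2 : s * ((u + C * v)^2) ≤ s * S2 := by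
    have hexp : s * ((u + C * v)^2)
        = (s + C) * S1 + (C * s^2 + C^2 * s) * (m:ℝ) - C * (u - s * v)^2 := by
      rw [← hu2, ← hv2]; ring
    have hA : s * ((u + C * v)^2) ≤ (s + C) * S1 + (C * s^2 + C^2 * s) * (m:ℝ) := by
      have h := mul_nonneg hC0 (sq_nonneg (u - s * v))
      linarith
    rw [← hident]
    exact hA.trans (le_add_of_nonneg_right hmono)
  have hspos : 0 < s := lt_trans (by norm_num) hs_lb
  have hkey3 : (u + C * v)^2 ≤ S2 := le_of_mul_le_mul_left hkey2 hspos
  have hkey : u + C * v ≤ Real.sqrt S2 := by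
    have := Real.sqrt_le_sqrt hkey3
    rwa [Real.sqrt_sq (by positivity)] at this
  -- triangle inequality
  have htri : Real.sqrt S2 ≤ l2norm (fun t => ri t - y t) + l2norm (fun t => ri t - p) := by
    have e1 : Real.sqrt S2 = l2norm (fun t => y t - p) := by rw [l2norm]
    have e2 : l2norm (fun t => y t - ri t) = l2norm (fun t => ri t - y t) := by
      unfold l2norm
      congr 1
      apply Finset.sum_congr rfl
      intro t _
      ring
    have := l2norm_triangle (fun t => y t - ri t) (fun t => ri t - p)
    have e3 : (fun t => (y t - ri t) + (ri t - p)) = fun t => y t - p := by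
      funext t; ring
    rw [e3] at this
    rw [e1]
    rw [e2] at this
    linarith
  -- epsilon bound
  have hdiv : (2 / v) * v = 2 := div_mul_cancel₀ _ (ne_of_gt hvpos)
  have hεv : ε * v < C * v - 2 := by
    calc ε * v < (C - 2 / v) * v := mul_lt_mul_of_pos_right hε1 hvpos
      _ = C * v - 2 := by rw [sub_mul, hdiv]
  have hu_eq : l2norm (fun t => pstar p - y t) = u := by rw [l2norm]
  rw [hu_eq]
  have hcl : l2norm (fun t => ri t - p) < ε * v := hclose
  linarith

end
end

section
/- Let 0 < p < 1/2, p* = (1/2 + p)/2, and m ≥ 1. The function f(x) = √(m·p² + x·(1 − 2p)) − √(m·(p*)² + x·(1 − 2p*)) is strictly increasing on [0, ∞). -/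
noncomputable section

/-- The function `f(x) = √(m p² + x (1 − 2p)) − √(m (p*)² + x (1 − 2p*))`, representing the
difference `‖p̄ − y‖₂ − ‖r* − y‖₂` of Euclidean distances from a binary outcome `y` with
`‖y‖₁ = x` to the constant vectors `p̄ = (p, …, p)` and `r* = (p*, …, p*)`, is strictly
increasing on `[0, ∞)` whenever `0 < p < 1/2` and `m ≥ 1`. -/
theorem distance_difference_strictMonoOn (m : ℕ) (p : ℝ) (hm : 1 ≤ m)
    (hp0 : 0 < p) (hp : p < 1 / 2) :
    StrictMonoOn (fun x : ℝ =>
      Real.sqrt (m * p ^ 2 + x * (1 - 2 * p)) -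
        Real.sqrt (m * pstar p ^ 2 + x * (1 - 2 * pstar p)))
      (Set.Ici (0 : ℝ)) := by
  have hq : pstar p = (1 / 2 + p) / 2 := rfl
  have hm' : (1 : ℝ) ≤ (m : ℝ) := by exact_mod_cast hm
  set q : ℝ := pstar p with hqdef
  have hpq : p < q := by rw [hq]; linarith
  have hq0 : 0 < q := lt_trans hp0 hpq
  have hqh : q < 1 / 2 := by rw [hq]; linarith
  have hb : (0 : ℝ) < 1 - 2 * p := by linarith
  have hd : (0 : ℝ) < 1 - 2 * q := by linarith
  have hbd : 1 - 2 * p = 2 * (1 - 2 * q) := by rw [hq]; ring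
  apply StrictMonoOn.mono (s := Set.Ici (0 : ℝ))
    (strictMonoOn_of_deriv_pos (convex_Ici 0) ?_ ?_) le_rfl
  · apply Continuous.continuousOn
    fun_prop
  · intro x hx
    rw [interior_Ici] at hx
    have hx0 : (0 : ℝ) < x := hx
    have hA : 0 < (m : ℝ) * p ^ 2 + x * (1 - 2 * p) := by positivity
    have hC : 0 < (m : ℝ) * q ^ 2 + x * (1 - 2 * q) := by positivity
    have h1 : HasDerivAt (fun x : ℝ => (m : ℝ) * p ^ 2 + x * (1 - 2 * p)) (1 - 2 * p) x := by
      simpa using ((hasDerivAt_id x).mul_const (1 - 2 * p)).const_add ((m : ℝ) * p ^ 2)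
    have h2 : HasDerivAt (fun x : ℝ => (m : ℝ) * q ^ 2 + x * (1 - 2 * q)) (1 - 2 * q) x := by
      simpa using ((hasDerivAt_id x).mul_const (1 - 2 * q)).const_add ((m : ℝ) * q ^ 2)
    have h1' := h1.sqrt (ne_of_gt hA)
    have h2' := h2.sqrt (ne_of_gt hC)
    have hD := (h1'.fun_sub h2').deriv
    rw [hD]
    -- key inequality: A < 4 C
    have hkey : (m : ℝ) * p ^ 2 + x * (1 - 2 * p) <
        4 * ((m : ℝ) * q ^ 2 + x * (1 - 2 * q)) := by
      have hsq : p ^ 2 < 4 * q ^ 2 := by nlinarith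
      nlinarith [mul_pos hx0 hd, mul_lt_mul_of_pos_left hsq (show (0:ℝ) < (m:ℝ) by linarith)]
    have hsqrt : Real.sqrt ((m : ℝ) * p ^ 2 + x * (1 - 2 * p)) <
        2 * Real.sqrt ((m : ℝ) * q ^ 2 + x * (1 - 2 * q)) := by
      have h4 : Real.sqrt (4 * ((m : ℝ) * q ^ 2 + x * (1 - 2 * q))) =
          2 * Real.sqrt ((m : ℝ) * q ^ 2 + x * (1 - 2 * q)) := by
        rw [show (4 : ℝ) = 2 ^ 2 by norm_num, Real.sqrt_mul (by positivity),
          Real.sqrt_sq (by norm_num)]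
      rw [← h4]
      exact Real.sqrt_lt_sqrt hA.le hkey
    have hsA : 0 < Real.sqrt ((m : ℝ) * p ^ 2 + x * (1 - 2 * p)) := Real.sqrt_pos.mpr hA
    have hsC : 0 < Real.sqrt ((m : ℝ) * q ^ 2 + x * (1 - 2 * q)) := Real.sqrt_pos.mpr hC
    rw [sub_pos, div_lt_div_iff₀ (by positivity) (by positivity)]
    nlinarith
end
end

section
/- Suppose m, p, ε satisfy Condition 1, and there are n ≥ 2 forecasters with reports r_1, …, r_n ∈ [0,1]^m such that forecaster i's report r_i is ε-ℓ² approximately truthful with respect to p̄ and, for each j ≠ i, r_j is ε-ℓ² approximately truthful with respect to c. Then there exists an outcome vector y ∈ {0,1}^m such that U_i(r_i; r_{−i}, y) < U_i(r*; r_{−i}, y). -/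
open scoped Classical

noncomputable section

/-- A report vector `r` is ε-ℓ² approximately truthful w.r.t. the belief vector `q`
if `(1/√m) ‖r − q‖₂ ≤ ε`. -/
def ApproxTruthful {m : ℕ} (ε : ℝ) (r q : Fin m → ℝ) : Prop :=
  (1 / Real.sqrt m) * l2norm (fun t => r t - q t) ≤ ε

/-- The winning set of the Simple Max mechanism with the quadratic score: the set of
forecasters whose report is closest in Euclidean distance to the outcome vector `y`. -/
def winner {n m : ℕ} (r : Fin n → Fin m → ℝ) (y : Fin m → ℝ) : Finset (Fin n) :=
  Finset.univ.filter fun k => ∀ l : Fin n,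
    l2norm (fun t => r k t - y t) ≤ l2norm (fun t => r l t - y t)

/-- The Simple Max utility of forecaster `i`: `1/|winner|` if `i` is in the winning set,
and `0` otherwise (ties are split uniformly). -/
def utility {n m : ℕ} (i : Fin n) (r : Fin n → Fin m → ℝ) (y : Fin m → ℝ) : ℝ :=
  (if i ∈ winner r y then (1 : ℝ) else 0) / (winner r y).card

namespace HedgeAux

lemma l2_dist {m : ℕ} (a b : Fin m → ℝ) :
    l2norm (fun t => a t - b t) =
      dist ((WithLp.equiv 2 (Fin m → ℝ)).symm a) ((WithLp.equiv 2 (Fin m → ℝ)).symm b) := by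
  rw [EuclideanSpace.dist_eq]
  unfold l2norm
  congr 1
  refine Finset.sum_congr rfl fun t _ => ?_
  rw [Real.dist_eq, sq_abs]
  rfl

lemma l2_tri {m : ℕ} (a b c : Fin m → ℝ) :
    l2norm (fun t => a t - c t) ≤ l2norm (fun t => a t - b t) + l2norm (fun t => b t - c t) := by
  rw [l2_dist, l2_dist, l2_dist]
  exact dist_triangle _ _ _

lemma l2_comm {m : ℕ} (a b : Fin m → ℝ) :
    l2norm (fun t => a t - b t) = l2norm (fun t => b t - a t) := by
  rw [l2_dist, l2_dist]
  exact dist_comm _ _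

lemma sum_ifpath {m : ℕ} (x : ℝ) {k : ℕ} (hk : k ≤ m) :
    ∑ τ : Fin m, (x - (if (τ : ℕ) < k then (1:ℝ) else 0))^2 = m * x^2 + k * (1 - 2*x) := by
  classical
  have hcard : (Finset.univ.filter fun τ : Fin m => (τ : ℕ) < k).card = k := by
    rcases lt_or_eq_of_le hk with h | h
    · have he : (Finset.univ.filter fun τ : Fin m => (τ : ℕ) < k) = Finset.Iio (⟨k, h⟩ : Fin m) := by
        ext τ
        simp [Finset.mem_Iio, Fin.lt_def]
      rw [he, Fin.card_Iio]
    · have he : (Finset.univ.filter fun τ : Fin m => (τ : ℕ) < k) = Finset.univ := by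
        ext τ
        have h2 := τ.isLt
        simp only [Finset.mem_filter, Finset.mem_univ, true_and, iff_true]
        omega
      rw [he, Finset.card_univ, Fintype.card_fin, h]
  have hcard2 : (Finset.univ.filter fun τ : Fin m => ¬ (τ : ℕ) < k).card = m - k := by
    have h := Finset.card_filter_add_card_filter_not
      (s := (Finset.univ : Finset (Fin m))) (p := fun τ : Fin m => (τ : ℕ) < k)
    rw [Finset.card_univ, Fintype.card_fin, hcard] at h
    omega
  rw [← Finset.sum_filter_add_sum_filter_not Finset.univ (fun τ : Fin m => (τ : ℕ) < k)]
  have h1 : ∀ τ ∈ Finset.univ.filter (fun τ : Fin m => (τ : ℕ) < k),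
      (x - (if (τ : ℕ) < k then (1:ℝ) else 0))^2 = (x-1)^2 := by
    intro τ hτ
    rw [Finset.mem_filter] at hτ
    rw [if_pos hτ.2]
  have h2 : ∀ τ ∈ Finset.univ.filter (fun τ : Fin m => ¬ (τ : ℕ) < k),
      (x - (if (τ : ℕ) < k then (1:ℝ) else 0))^2 = x^2 := by
    intro τ hτ
    rw [Finset.mem_filter] at hτ
    rw [if_neg hτ.2]
    ring
  rw [Finset.sum_congr rfl h1, Finset.sum_congr rfl h2, Finset.sum_const, Finset.sum_const,
    hcard, hcard2, nsmul_eq_mul, nsmul_eq_mul]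
  have hmk : ((m - k : ℕ) : ℝ) = (m : ℝ) - (k : ℝ) := by
    rw [Nat.cast_sub hk]
  rw [hmk]
  ring

end HedgeAux

set_option maxHeartbeats 4000000 in
open HedgeAux in
/-- **Lemma 4 (strict dominance on some outcome).** Under Condition 1, if forecaster `i`'s
report is ε-ℓ² approximately truthful w.r.t. `p̄ = (p,…,p)` and every other forecaster's
report is ε-ℓ² approximately truthful w.r.t. `c = (1/2,…,1/2)`, then there is a binary
outcome `y` on which forecaster `i`'s utility from hedging to `r* = (p*,…,p*)` is strictly
larger than her utility from `r_i`. -/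
theorem hedging_strict_dominance_exists (m n : ℕ) (p ε : ℝ) (hcond : Cond1 m p ε) (hn : 2 ≤ n)
    (i : Fin n) (r : Fin n → Fin m → ℝ)
    (hrange : ∀ j t, r j t ∈ Set.Icc (0 : ℝ) 1)
    (hi : ApproxTruthful ε (r i) (fun _ => p))
    (hj : ∀ j, j ≠ i → ApproxTruthful ε (r j) (fun _ => 1 / 2)) :
    ∃ y : Fin m → ℝ, (∀ t, y t = 0 ∨ y t = 1) ∧
      utility i r y < utility i (Function.update r i fun _ => pstar p) y := by
  classical
  obtain ⟨hm, ⟨hp0, hp1⟩, hε0, hε1⟩ := hcond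
  set q : ℝ := pstar p with hq
  set t : ℝ := Real.sqrt m with ht
  set g : ℝ := 2 / t with hg
  set s : ℝ := Real.sqrt (q * (1 - q)) with hs
  have hqval : q = (1/2 + p)/2 := by rw [hq]; rfl
  have hN : (21:ℝ) ≤ (m:ℝ) := by exact_mod_cast hm
  have ht4 : (4:ℝ) ≤ t := by
    rw [ht]
    have h16 : (16:ℝ) ≤ (m:ℝ) := by linarith
    have h := Real.sqrt_le_sqrt h16
    rwa [show (16:ℝ) = 4^2 by norm_num, Real.sqrt_sq (show (0:ℝ) ≤ 4 by norm_num)] at h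
  have ht0 : (0:ℝ) < t := by linarith
  have htne : t ≠ 0 := ne_of_gt ht0
  have htsq : t^2 = (m:ℝ) := by rw [ht]; exact Real.sq_sqrt (by linarith)
  have hvi : l2norm (fun τ => r i τ - p) ≤ ε * t := by
    have h : (1 / t) * l2norm (fun τ => r i τ - p) ≤ ε := hi
    rw [one_div, inv_mul_le_iff₀ ht0] at h
    linarith [h]
  have hvj : ∀ l, l ≠ i → l2norm (fun τ => r l τ - 1/2) ≤ ε * t := by
    intro l hli
    have h : (1 / t) * l2norm (fun τ => r l τ - 1/2) ≤ ε := hj l hli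
    rw [one_div, inv_mul_le_iff₀ ht0] at h
    linarith [h]
  have hs0 : (0:ℝ) ≤ s := by rw [hs]; exact Real.sqrt_nonneg _
  clear_value q t g s
  obtain ⟨d, hd⟩ : ∃ d : ℝ, d = 1/4 - p/2 := ⟨_, rfl⟩
  have hg0 : (0:ℝ) < g := by rw [hg]; positivity
  have hg2 : g ≤ 1/2 := by rw [hg, div_le_iff₀ ht0]; linarith
  have hp12 : p < 1/2 := by
    have h := Real.sqrt_nonneg (g * (1 - g))
    linarith [hp1]
  have hd0 : (0:ℝ) < d := by rw [hd]; linarith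
  have hd4 : d < 1/4 := by rw [hd]; linarith
  have hpd : p = 1/2 - 2*d := by rw [hd]; ring
  have hqd : q = 1/2 - d := by rw [hqval, hd]; ring
  have hqq : q * (1 - q) = 1/4 - d^2 := by rw [hqd]; ring
  have hqqnn : (0:ℝ) ≤ q * (1 - q) := by nlinarith [hqq, hd0, hd4]
  have hs_sq : s^2 = 1/4 - d^2 := by rw [hs, Real.sq_sqrt hqqnn, hqq]
  have hs14 : (1/4:ℝ) ≤ s := by
    have h1 : (1/16:ℝ) ≤ q * (1 - q) := by rw [hqq]; nlinarith
    have h2 := Real.sqrt_le_sqrt h1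
    rw [show (1/16:ℝ) = (1/4)^2 by norm_num, Real.sqrt_sq (show (0:ℝ) ≤ 1/4 by norm_num)] at h2
    rw [hs]
    exact h2
  have hεs : ε + g < 1/2 - s := by linarith [hε1]
  have hε12 : ε < 1/2 := by linarith
  -- KEY inequality
  have hKEY : 2*g*s + g^2 ≤ d^2 - ε + ε^2 := by
    have hE2 : (0:ℝ) ≤ 1 - (1/2 - s - g) - ε := by linarith
    have hprod : 0 ≤ ((1/2 - s - g) - ε) * (1 - (1/2 - s - g) - ε) :=
      mul_nonneg (by linarith) hE2
    have hexp : ((1/2 - s - g) - ε) * (1 - (1/2 - s - g) - ε)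
        = 1/4 - s^2 - 2*g*s - g^2 - ε + ε^2 := by ring
    linarith [hprod, hexp, hs_sq]
  have hεd : ε < d := by
    by_contra hcon
    push_neg at hcon
    have h1 : d*(1-ε) ≤ ε*(1-ε) := mul_le_mul_of_nonneg_right hcon (by linarith)
    have h2 : d*(1/2) ≤ d*(1-ε) := mul_le_mul_of_nonneg_left (by linarith) hd0.le
    have h3 : 2*d^2 ≤ d*(1/2) := by nlinarith [hd0, hd4]
    have h4 : 0 ≤ 2*g*s := mul_nonneg (by linarith) hs0
    clear * - h1 h2 h3 h4 hKEY hd0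
    nlinarith [hKEY, sq_nonneg g, sq_nonneg d, mul_pos hd0 hd0]
  -- the path of outcomes
  obtain ⟨y, hy⟩ : ∃ y : ℕ → Fin m → ℝ, ∀ k τ, y k τ = if (τ : ℕ) < k then 1 else 0 :=
    ⟨_, fun _ _ => rfl⟩
  have hybin : ∀ k τ, y k τ = 0 ∨ y k τ = 1 := by
    intro k τ
    rw [hy]
    by_cases h : (τ : ℕ) < k
    · right; rw [if_pos h]
    · left; rw [if_neg h]
  obtain ⟨D, hD⟩ : ∃ D : Fin n → ℕ → ℝ, ∀ j k, D j k = ∑ τ, (r j τ - y k τ)^2 :=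
    ⟨_, fun _ _ => rfl⟩
  have hD0 : ∀ j k, 0 ≤ D j k := by
    intro j k
    rw [hD]
    exact Finset.sum_nonneg fun τ _ => sq_nonneg _
  have hnd : ∀ j k, l2norm (fun τ => r j τ - y k τ) = Real.sqrt (D j k) := by
    intro j k
    rw [hD]
    rfl
  -- distance of a constant vector to the path
  have hpath : ∀ (x : ℝ) (k : ℕ), k ≤ m →
      l2norm (fun τ => x - y k τ) = Real.sqrt ((m:ℝ) * x^2 + (k:ℝ) * (1 - 2*x)) := by
    intro x k hk
    unfold l2norm
    congr 1
    calc ∑ τ : Fin m, (x - y k τ)^2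
        = ∑ τ : Fin m, (x - (if (τ:ℕ) < k then (1:ℝ) else 0))^2 :=
          Finset.sum_congr rfl fun τ _ => by rw [hy]
      _ = (m:ℝ) * x^2 + (k:ℝ) * (1 - 2*x) := sum_ifpath x hk
  have hpathnn : ∀ (x : ℝ) (k : ℕ), k ≤ m → 0 ≤ (m:ℝ) * x^2 + (k:ℝ) * (1 - 2*x) := by
    intro x k hk
    rw [← sum_ifpath x hk]
    exact Finset.sum_nonneg fun τ _ => sq_nonneg _
  -- the midpoint-vector distance
  have hcy : ∀ k : ℕ, k ≤ m → l2norm (fun τ => (1/2:ℝ) - y k τ) = t/2 := by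
    intro k hk
    rw [hpath (1/2) k hk]
    have he : (m:ℝ) * (1/2:ℝ)^2 + (k:ℝ) * (1 - 2*(1/2:ℝ)) = (t/2)^2 := by
      rw [← htsq]; ring
    rw [he, Real.sqrt_sq (show (0:ℝ) ≤ t/2 by linarith)]
  -- opponents stay in the band
  have hLj : ∀ l, l ≠ i → ∀ k : ℕ, k ≤ m →
      (1/2 - ε) * t ≤ Real.sqrt (D l k) ∧ Real.sqrt (D l k) ≤ (1/2 + ε) * t := by
    intro l hli k hk
    have tri1 : l2norm (fun τ => (1/2:ℝ) - y k τ) ≤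
        l2norm (fun τ => (1/2:ℝ) - r l τ) + l2norm (fun τ => r l τ - y k τ) :=
      l2_tri (fun _ => (1/2:ℝ)) (r l) (y k)
    have tri2 : l2norm (fun τ => r l τ - y k τ) ≤
        l2norm (fun τ => r l τ - (1/2:ℝ)) + l2norm (fun τ => (1/2:ℝ) - y k τ) :=
      l2_tri (r l) (fun _ => (1/2:ℝ)) (y k)
    have hcomm : l2norm (fun τ => (1/2:ℝ) - r l τ) = l2norm (fun τ => r l τ - (1/2:ℝ)) :=
      l2_comm _ _
    rw [hcy k hk] at tri1 tri2
    rw [hnd] at tri1 tri2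
    rw [hcomm] at tri1
    have hb := hvj l hli
    clear * - tri1 tri2 hb
    constructor
    · nlinarith [tri1, hb]
    · nlinarith [tri2, hb]
  -- forecaster i's distance vs the p-vector
  have hLi : ∀ k : ℕ, k ≤ m →
      l2norm (fun τ => p - y k τ) - ε * t ≤ Real.sqrt (D i k) ∧
      Real.sqrt (D i k) ≤ l2norm (fun τ => p - y k τ) + ε * t := by
    intro k hk
    have tri1 : l2norm (fun τ => p - y k τ) ≤
        l2norm (fun τ => p - r i τ) + l2norm (fun τ => r i τ - y k τ) :=
      l2_tri (fun _ => p) (r i) (y k)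
    have tri2 : l2norm (fun τ => r i τ - y k τ) ≤
        l2norm (fun τ => r i τ - p) + l2norm (fun τ => p - y k τ) :=
      l2_tri (r i) (fun _ => p) (y k)
    have hcomm : l2norm (fun τ => p - r i τ) = l2norm (fun τ => r i τ - p) := l2_comm _ _
    rw [hnd] at tri1 tri2
    rw [hcomm] at tri1
    constructor
    · linarith [tri1, hvi]
    · linarith [tri2, hvi]
  -- Bad m holds
  have hBadm : ∃ jj, jj ≠ i ∧ D jj m < D i m := by
    haveI : Nontrivial (Fin n) := Fin.nontrivial_iff_two_le.mpr hn
    obtain ⟨j, hji⟩ := exists_ne i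
    refine ⟨j, hji, ?_⟩
    have h1 : Real.sqrt (D j m) ≤ (1/2 + ε) * t := (hLj j hji m le_rfl).2
    have hpm : l2norm (fun τ => p - y m τ) = (1 - p) * t := by
      rw [hpath p m le_rfl]
      have he : (m:ℝ) * p^2 + (m:ℝ) * (1 - 2*p) = ((1-p)*t)^2 := by rw [← htsq]; ring
      rw [he, Real.sqrt_sq (show (0:ℝ) ≤ (1-p)*t from mul_nonneg (by linarith) ht0.le)]
    have h2 : (1 - p - ε) * t ≤ Real.sqrt (D i m) := by
      have h := (hLi m le_rfl).1
      rw [hpm] at h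
      clear * - h
      nlinarith [h]
    have h3 : (1/2 + ε) * t < (1 - p - ε) * t := by
      have h : (1/2 + ε) < 1 - p - ε := by rw [hpd]; linarith
      exact mul_lt_mul_of_pos_right h ht0
    have h4 : Real.sqrt (D j m) < Real.sqrt (D i m) := by linarith
    have e1 : D j m = Real.sqrt (D j m) ^ 2 := (Real.sq_sqrt (hD0 j m)).symm
    have e2 : D i m = Real.sqrt (D i m) ^ 2 := (Real.sq_sqrt (hD0 i m)).symm
    rw [e1, e2]
    exact pow_lt_pow_left₀ h4 (Real.sqrt_nonneg _) (by norm_num)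
  -- Bad 0 fails
  have hBad0 : ∀ jj, jj ≠ i → ¬ (D jj 0 < D i 0) := by
    intro j hji
    have h1 : (1/2 - ε) * t ≤ Real.sqrt (D j 0) := (hLj j hji 0 (Nat.zero_le m)).1
    have hp0' : l2norm (fun τ => p - y 0 τ) = p * t := by
      rw [hpath p 0 (Nat.zero_le m)]
      have he : (m:ℝ) * p^2 + ((0:ℕ):ℝ) * (1 - 2*p) = (p*t)^2 := by
        rw [← htsq]; push_cast; ring
      rw [he, Real.sqrt_sq (show (0:ℝ) ≤ p*t from mul_nonneg hp0.le ht0.le)]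
    have h2 : Real.sqrt (D i 0) ≤ (p + ε) * t := by
      have h := (hLi 0 (Nat.zero_le m)).2
      rw [hp0'] at h
      clear * - h
      nlinarith [h]
    have h3 : (p + ε) * t ≤ (1/2 - ε) * t := by
      have h : p + ε ≤ 1/2 - ε := by rw [hpd]; linarith
      exact mul_le_mul_of_nonneg_right h ht0.le
    have h4 : Real.sqrt (D i 0) ≤ Real.sqrt (D j 0) := by linarith
    have e1 : D i 0 = Real.sqrt (D i 0) ^ 2 := (Real.sq_sqrt (hD0 i 0)).symm
    have e2 : D j 0 = Real.sqrt (D j 0) ^ 2 := (Real.sq_sqrt (hD0 j 0)).symm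
    refine not_lt.mpr ?_
    rw [e1, e2]
    exact pow_le_pow_left₀ (Real.sqrt_nonneg _) h4 2
  -- the flip step bound
  have hflip : ∀ (j : Fin n) (k : ℕ) (hk : k < m), D j k ≤ D j (k+1) + 1 := by
    intro j k hk
    have hstep : D j k - D j (k+1) =
        (r j ⟨k, hk⟩ - y k ⟨k, hk⟩)^2 - (r j ⟨k, hk⟩ - y (k+1) ⟨k, hk⟩)^2 := by
      rw [hD, hD, ← Finset.sum_sub_distrib]
      refine Finset.sum_eq_single_of_mem (⟨k, hk⟩ : Fin m) (Finset.mem_univ _) ?_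
      intro τ _ hτ
      have hne : (τ : ℕ) ≠ k := by
        intro hc
        exact hτ (Fin.ext hc)
      have hyy : y k τ = y (k+1) τ := by
        rw [hy, hy]
        by_cases hcase : (τ : ℕ) < k
        · rw [if_pos hcase, if_pos (by omega)]
        · rw [if_neg hcase, if_neg (by omega)]
      rw [hyy]
      ring
    have h0 : y k ⟨k, hk⟩ = 0 := by rw [hy]; exact if_neg (lt_irrefl k)
    have h1 : y (k+1) ⟨k, hk⟩ = 1 := by rw [hy]; exact if_pos (Nat.lt_succ_self k)
    obtain ⟨hr0, hr1⟩ := hrange j ⟨k, hk⟩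
    rw [h0, h1] at hstep
    clear * - hr0 hr1 hstep
    nlinarith [hstep]
  -- first crossing
  have hex : ∃ k, ∃ jj, jj ≠ i ∧ D jj k < D i k := ⟨m, hBadm⟩
  set K := Nat.find hex with hK
  have hKBad : ∃ jj, jj ≠ i ∧ D jj K < D i K := Nat.find_spec hex
  have hKm : K ≤ m := Nat.find_le hBadm
  have hK0 : K ≠ 0 := by
    intro h
    obtain ⟨j, hji, hlt⟩ := hKBad
    rw [h] at hlt
    exact hBad0 j hji hlt
  obtain ⟨k', hk'⟩ : ∃ k', K = k' + 1 := ⟨K - 1, by omega⟩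
  have hk'm : k' < m := by omega
  have hnotBad : ∀ jj, jj ≠ i → D i k' ≤ D jj k' := by
    have h := Nat.find_min hex (m := k') (by rw [← hK]; omega)
    push_neg at h
    intro jj hji
    exact h jj hji
  clear_value K
  clear hK
  -- the claim: the hedge report beats every opponent at step K
  have claim : ∀ l, l ≠ i → (m:ℝ) * q^2 + (K:ℝ) * (1 - 2*q) ≤ D l K := by
    by_contra hcon
    push_neg at hcon
    obtain ⟨l, hli, hlt⟩ := hcon
    have hKcast : (K:ℝ) = (k':ℝ) + 1 := by rw [hk']; push_cast; ring
    set Gm : ℝ := (m:ℝ) * q^2 + (K:ℝ) * (1 - 2*q) with hGm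
    have hGm0 : 0 ≤ Gm := le_trans (hD0 l K) hlt.le
    set Γ : ℝ := Real.sqrt Gm with hΓ
    have hΓnn : 0 ≤ Γ := by rw [hΓ]; exact Real.sqrt_nonneg _
    have hΓsq : Γ^2 = Gm := by rw [hΓ]; exact Real.sq_sqrt hGm0
    clear_value Gm Γ
    -- lower bound on Γ
    have hL1 : (1/2 - ε) * t ≤ Real.sqrt (D l K) := (hLj l hli K hKm).1
    have h120 : (0:ℝ) ≤ (1/2 - ε) * t := mul_nonneg (by linarith) ht0.le
    have ha : ((1/2 - ε) * t)^2 ≤ D l K := by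
      have h := pow_le_pow_left₀ h120 hL1 2
      rwa [Real.sq_sqrt (hD0 l K)] at h
    have hΓ0 : (1/2 - ε) * t ≤ Γ := by
      have h1 : ((1/2 - ε) * t)^2 ≤ Gm := le_trans ha hlt.le
      have h2 := Real.sqrt_le_sqrt h1
      rw [Real.sqrt_sq h120] at h2
      rwa [← hΓ] at h2
    -- D i k' is controlled
    have hDik' : D i k' ≤ Gm + 1 := by
      have h1 : D i k' ≤ D l k' := hnotBad l hli
      have h2 : D l k' ≤ D l (k'+1) + 1 := hflip l k' hk'm
      rw [← hk'] at h2
      linarith [hlt]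
    have hsqDik' : Real.sqrt (D i k') ≤ Γ + 1 := by
      have h1 : D i k' ≤ (Γ + 1)^2 := by
        have e : (Γ + 1)^2 = Γ^2 + 2*Γ + 1 := by ring
        rw [e, hΓsq]
        linarith [hΓnn, hDik']
      have h2 := Real.sqrt_le_sqrt h1
      rwa [Real.sqrt_sq (show (0:ℝ) ≤ Γ + 1 by linarith)] at h2
    -- the W bound
    set W : ℝ := (m:ℝ) * p^2 + (k':ℝ) * (1 - 2*p) with hW
    have hW0 : 0 ≤ W := by rw [hW]; exact hpathnn p k' hk'm.le
    clear_value W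
    have hWsqrt : Real.sqrt W ≤ Γ + 1 + ε * t := by
      have h1 := (hLi k' hk'm.le).1
      rw [hpath p k' hk'm.le] at h1
      rw [← hW] at h1
      linarith [hsqDik']
    have hWle : W ≤ (Γ + 1 + ε * t)^2 := by
      have h1 := pow_le_pow_left₀ (Real.sqrt_nonneg W) hWsqrt 2
      rwa [Real.sq_sqrt hW0] at h1
    -- final contradiction
    have hc : (1:ℝ) + ε * t ≤ (1/2 - ε) * t := by
      have h1 : ε + g < 1/4 := by linarith [hεs, hs14]
      have h2 : (1:ℝ) = (g/2) * t := by rw [hg]; field_simp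
      have h3 : 0 ≤ t * (1/2 - 2*ε - g/2) := mul_nonneg ht0.le (by linarith)
      clear * - h2 h3
      linarith [h3, h2]
    have hWΓ : W = (m:ℝ) * p^2 + 2*Γ^2 - 2*(m:ℝ)*q^2 - 4*d := by
      rw [hΓsq, hGm, hKcast, hW, hqd, hpd]
      ring
    have hmono : ((1/2 - ε) * t)^2 - 2*(1 + ε*t)*((1/2 - ε) * t) ≤ Γ^2 - 2*(1 + ε*t)*Γ := by
      have hprod : 0 ≤ (Γ - (1/2 - ε) * t) * (Γ + (1/2 - ε) * t - 2*(1 + ε*t)) :=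
        mul_nonneg (by linarith) (by linarith)
      have hexp : (Γ - (1/2 - ε) * t) * (Γ + (1/2 - ε) * t - 2*(1 + ε*t))
          = (Γ^2 - 2*(1 + ε*t)*Γ) - (((1/2 - ε) * t)^2 - 2*(1 + ε*t)*((1/2 - ε) * t)) := by
        ring
      linarith [hprod, hexp]
    have hpos : 0 < 2*(m:ℝ)*(d^2 - ε + ε^2) - t - 4*d - 1 := by
      have h8 : 2*(m:ℝ)*(2*g*s + g^2) = 8*s*t + 8 := by
        rw [← htsq, hg]
        field_simp
        ring
      have h9 : 2*(m:ℝ)*(2*g*s + g^2) ≤ 2*(m:ℝ)*(d^2 - ε + ε^2) := by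
        have hm0 : (0:ℝ) ≤ 2*(m:ℝ) := by linarith
        exact mul_le_mul_of_nonneg_left hKEY hm0
      have h10 : 2*t ≤ 8*s*t := by
        have := mul_le_mul_of_nonneg_right (show (2:ℝ) ≤ 8*s by linarith) ht0.le
        linarith [this]
      linarith [h8, h9, h10, ht4, hd4, hd0]
    have hΓ₀id : ((1/2 - ε)*t)^2 - 2*(1 + ε*t)*((1/2 - ε)*t) +
        ((m:ℝ)*p^2 - 2*(m:ℝ)*q^2 - 4*d - (1 + ε*t)^2)
        = 2*(m:ℝ)*(d^2 - ε + ε^2) - t - 4*d - 1 := by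
      have hm' : (m:ℝ) = t^2 := htsq.symm
      rw [hpd, hqd, hm']
      ring
    have hdiff : W - (Γ + 1 + ε*t)^2 =
        Γ^2 - 2*(1 + ε*t)*Γ + ((m:ℝ)*p^2 - 2*(m:ℝ)*q^2 - 4*d - (1 + ε*t)^2) := by
      rw [hWΓ]
      ring
    have hfinal : (Γ + 1 + ε*t)^2 < W := by
      linarith [hmono, hΓ₀id, hpos, hdiff]
    linarith [hWle, hfinal]
  -- conclude
  obtain ⟨jst, hjsti, hjstlt⟩ := hKBad
  refine ⟨y K, hybin K, ?_⟩
  have hiw : i ∉ winner r (y K) := by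
    intro hmem
    simp only [winner, Finset.mem_filter] at hmem
    have h1 : l2norm (fun τ => r i τ - y K τ) ≤ l2norm (fun τ => r jst τ - y K τ) := hmem.2 jst
    rw [hnd, hnd] at h1
    have h2 : Real.sqrt (D jst K) < Real.sqrt (D i K) :=
      Real.sqrt_lt_sqrt (hD0 jst K) hjstlt
    linarith
  have hiw' : i ∈ winner (Function.update r i fun _ => q) (y K) := by
    simp only [winner, Finset.mem_filter]
    refine ⟨Finset.mem_univ _, fun l => ?_⟩
    by_cases hl : l = i
    · subst hl; exact le_rfl
    · simp only [Function.update_self, Function.update_of_ne hl]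
      have h1 : l2norm (fun τ => q - y K τ) = Real.sqrt ((m:ℝ)*q^2 + (K:ℝ)*(1 - 2*q)) :=
        hpath q K hKm
      rw [h1, hnd]
      exact Real.sqrt_le_sqrt (claim l hl)
  have hu1 : utility i r (y K) = 0 := by
    simp only [utility]
    rw [if_neg hiw, zero_div]
  have hu2 : 0 < utility i (Function.update r i fun _ => q) (y K) := by
    have hcard : 0 < ((winner (Function.update r i fun _ => q) (y K)).card : ℝ) := by
      have h := Finset.card_pos.mpr ⟨i, hiw'⟩
      exact_mod_cast h
    simp only [utility]
    rw [if_pos hiw']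
    exact one_div_pos.mpr hcard
  rw [hu1]
  exact hu2

end
end

section
/- (Hedging strictly dominates truthful reporting.) Suppose m, p, ε satisfy Condition 1. Let r_i ∈ [0,1]^m be any ε-ℓ² approximately truthful report with respect to p̄, and let σ_{−i} be any probability distribution over ([0,1]^m)^{n−1} such that with probability 1 each coordinate report r_j (j ≠ i) is ε-ℓ² approximately truthful with respect to c. Let Y ∈ {0,1}^m have independent coordinates with P(Y_t = 1) = p for each t, independent of σ_{−i}. Then E[U_i(r_i; R_{−i}, Y)] < E[U_i(r*; R_{−i}, Y)], where R_{−i} ∼ σ_{−i}. -/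
set_option maxHeartbeats 1000000


open MeasureTheory
open scoped Classical

noncomputable section

namespace HedgeAux


/-- squared ℓ² distance -/
def sd {m : ℕ} (u w : Fin m → ℝ) : ℝ := ∑ t, (u t - w t) ^ 2

lemma sd_nonneg {m : ℕ} (u w : Fin m → ℝ) : 0 ≤ sd u w :=
  Finset.sum_nonneg fun _ _ => sq_nonneg _

lemma l2norm_sub_eq {m : ℕ} (u w : Fin m → ℝ) :
    l2norm (fun t => u t - w t) = Real.sqrt (sd u w) := rfl

/-- l2norm of differences as a Euclidean distance -/
lemma sqrt_sd_eq_dist {m : ℕ} (u w : Fin m → ℝ) :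
    Real.sqrt (sd u w) =
      dist ((WithLp.equiv 2 (Fin m → ℝ)).symm u) ((WithLp.equiv 2 (Fin m → ℝ)).symm w) := by
  rw [EuclideanSpace.dist_eq]
  congr 1
  refine Finset.sum_congr rfl fun t _ => ?_
  show (u t - w t) ^ 2 = dist (u t) (w t) ^ 2
  rw [Real.dist_eq, sq_abs]

lemma sqrt_sd_triangle {m : ℕ} (u v w : Fin m → ℝ) :
    Real.sqrt (sd u w) ≤ Real.sqrt (sd u v) + Real.sqrt (sd v w) := by
  rw [sqrt_sd_eq_dist, sqrt_sd_eq_dist, sqrt_sd_eq_dist]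
  exact dist_triangle _ _ _

lemma sqrt_sd_symm {m : ℕ} (u v : Fin m → ℝ) :
    Real.sqrt (sd u v) = Real.sqrt (sd v u) := by
  rw [sqrt_sd_eq_dist, sqrt_sd_eq_dist, dist_comm]

lemma sqrt_sd_lower {m : ℕ} (u v w : Fin m → ℝ) :
    Real.sqrt (sd v w) - Real.sqrt (sd u v) ≤ Real.sqrt (sd u w) := by
  have h := sqrt_sd_triangle v u w
  have h2 := sqrt_sd_symm v u
  linarith [sqrt_sd_triangle v u w]

-- utility lemmas
lemma mem_winner_iff {n m : ℕ} (r : Fin n → Fin m → ℝ) (y : Fin m → ℝ) (k : Fin n) :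
    k ∈ winner r y ↔ ∀ l, Real.sqrt (sd (r k) y) ≤ Real.sqrt (sd (r l) y) := by
  simp only [winner, Finset.mem_filter, Finset.mem_univ, true_and]
  exact Iff.rfl

lemma utility_nonneg {n m : ℕ} (i : Fin n) (r : Fin n → Fin m → ℝ) (y : Fin m → ℝ) :
    0 ≤ utility i r y := by
  unfold utility
  apply div_nonneg _ (Nat.cast_nonneg _)
  split <;> norm_num

lemma utility_le_one {n m : ℕ} (i : Fin n) (r : Fin n → Fin m → ℝ) (y : Fin m → ℝ) :
    utility i r y ≤ 1 := by
  unfold utility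
  split
  · rename_i h
    have hc : 0 < ((winner r y).card : ℝ) := by
      have := Finset.card_pos.mpr ⟨i, h⟩
      exact_mod_cast this
    rw [div_le_one hc]
    have : 1 ≤ (winner r y).card := Finset.card_pos.mpr ⟨i, h⟩
    exact_mod_cast this
  · simp

lemma utility_eq_one {n m : ℕ} (i : Fin n) (r : Fin n → Fin m → ℝ) (y : Fin m → ℝ)
    (h : ∀ l, l ≠ i → Real.sqrt (sd (r i) y) < Real.sqrt (sd (r l) y)) :
    utility i r y = 1 := by
  have hiw : i ∈ winner r y := by
    rw [mem_winner_iff]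
    intro l
    rcases eq_or_ne l i with rfl | hl
    · exact le_refl _
    · exact le_of_lt (h l hl)
  have hw : winner r y = {i} := by
    refine Finset.eq_singleton_iff_unique_mem.mpr ⟨hiw, fun k hk => ?_⟩
    by_contra hki
    rw [mem_winner_iff] at hk
    exact absurd (hk i) (not_le.mpr (h k hki))
  unfold utility
  rw [hw]
  simp

lemma utility_le_half {n m : ℕ} (i j : Fin n) (r : Fin n → Fin m → ℝ) (y : Fin m → ℝ)
    (hij : j ≠ i) (hle : Real.sqrt (sd (r j) y) ≤ Real.sqrt (sd (r i) y)) :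
    utility i r y ≤ 1 / 2 := by
  unfold utility
  split
  · rename_i hi
    rw [mem_winner_iff] at hi
    have hj : j ∈ winner r y := by
      rw [mem_winner_iff]
      intro l
      exact le_trans hle (hi l)
    have h2 : 2 ≤ (winner r y).card := by
      refine Finset.one_lt_card.mpr ⟨i, ?_, j, hj, fun h => hij h.symm⟩
      rw [mem_winner_iff]; exact hi
    have h2' : (2:ℝ) ≤ ((winner r y).card : ℝ) := by exact_mod_cast h2
    rw [div_le_div_iff₀ (by linarith) (by norm_num)]
    linarith
  · norm_num

lemma utility_update_mono {n m : ℕ} (i : Fin n) (s : Fin n → Fin m → ℝ) (a b : Fin m → ℝ)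
    (y : Fin m → ℝ) (hab : Real.sqrt (sd b y) ≤ Real.sqrt (sd a y)) :
    utility i (Function.update s i a) y ≤ utility i (Function.update s i b) y := by
  have hupA : Function.update s i a i = a := Function.update_self i a s
  have hupB : Function.update s i b i = b := Function.update_self i b s
  have hoffA : ∀ l, l ≠ i → Function.update s i a l = s l := fun l hl =>
    Function.update_of_ne hl a s
  have hoffB : ∀ l, l ≠ i → Function.update s i b l = s l := fun l hl =>
    Function.update_of_ne hl b s
  by_cases hi : i ∈ winner (Function.update s i a) y
  · have hia : ∀ l, l ≠ i → Real.sqrt (sd a y) ≤ Real.sqrt (sd (s l) y) := by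
      intro l hl
      have := (mem_winner_iff _ _ _).mp hi l
      rwa [hupA, hoffA l hl] at this
    have hiB : i ∈ winner (Function.update s i b) y := by
      rw [mem_winner_iff]
      intro l
      rcases eq_or_ne l i with rfl | hl
      · exact le_refl _
      · rw [hupB, hoffB l hl]
        exact le_trans hab (hia l hl)
    have hsub : winner (Function.update s i b) y ⊆ winner (Function.update s i a) y := by
      intro k hk
      rcases eq_or_ne k i with rfl | hki
      · exact hi
      · rw [mem_winner_iff] at hk ⊢
        intro l
        rw [hoffA k hki]
        have hks : Real.sqrt (sd (s k) y) ≤ Real.sqrt (sd b y) := by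
          have := hk i
          rwa [hoffB k hki, hupB] at this
        rcases eq_or_ne l i with rfl | hl
        · rw [hupA]
          exact le_trans hks hab
        · rw [hoffA l hl]
          have := hk l
          rwa [hoffB k hki, hoffB l hl] at this
    have hcB : 0 < ((winner (Function.update s i b) y).card : ℝ) := by
      exact_mod_cast Finset.card_pos.mpr ⟨i, hiB⟩
    have hcc : ((winner (Function.update s i b) y).card : ℝ)
        ≤ ((winner (Function.update s i a) y).card : ℝ) := by
      exact_mod_cast Finset.card_le_card hsub
    unfold utility
    rw [if_pos hi, if_pos hiB]
    exact one_div_le_one_div_of_le hcB hcc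
  · have h0 : utility i (Function.update s i a) y = 0 := by
      unfold utility; rw [if_neg hi]; simp
    rw [h0]
    exact utility_nonneg _ _ _





/-- outcome vector -/
def Yv {m : ℕ} (b : Fin m → Bool) : Fin m → ℝ := fun t => if b t then 1 else 0

def Kc {m : ℕ} (b : Fin m → Bool) : ℕ := (Finset.univ.filter fun t => b t = true).card

lemma Kc_le {m : ℕ} (b : Fin m → Bool) : Kc b ≤ m := by
  have := Finset.card_filter_le (Finset.univ : Finset (Fin m)) (fun t => b t = true)
  simpa [Kc] using this

lemma sd_const {m : ℕ} (q : ℝ) (b : Fin m → Bool) :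
    sd (fun _ => q) (Yv b) = (m : ℝ) * q ^ 2 + (Kc b : ℝ) * (1 - 2 * q) := by
  have h1 : ∀ t : Fin m, (q - Yv b t) ^ 2 = if b t = true then (q - 1) ^ 2 else q ^ 2 := by
    intro t
    by_cases h : b t <;> simp [Yv, h]
  unfold sd
  rw [Finset.sum_congr rfl fun t _ => h1 t, Finset.sum_ite, Finset.sum_const, Finset.sum_const]
  have h2 : (Finset.univ.filter fun t : Fin m => ¬ (b t = true)).card = m - Kc b := by
    rw [Finset.filter_not, Finset.card_sdiff_of_subset (Finset.filter_subset _ _), Finset.card_univ,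
      Fintype.card_fin]
    rfl
  rw [h2]
  have hK := Kc_le b
  rw [show (Finset.univ.filter fun t : Fin m => b t = true).card = Kc b from rfl]
  rw [nsmul_eq_mul, nsmul_eq_mul, Nat.cast_sub hK]
  push_cast
  ring

lemma Yv_update {m : ℕ} (b : Fin m → Bool) (t₀ : Fin m) :
    Yv (Function.update b t₀ false) = Function.update (Yv b) t₀ 0 := by
  funext t
  rcases eq_or_ne t t₀ with rfl | ht
  · simp [Yv, Function.update_self]
  · simp [Yv, Function.update_of_ne ht]

lemma sd_flip {m : ℕ} (v : Fin m → ℝ) (b : Fin m → Bool) (t₀ : Fin m) (h : b t₀ = true) :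
    sd v (Yv (Function.update b t₀ false)) = sd v (Yv b) + (2 * v t₀ - 1) := by
  unfold sd
  rw [Yv_update]
  have hsplit : ∀ f : Fin m → ℝ, ∑ t, f t = f t₀ + ∑ t ∈ Finset.univ \ {t₀}, f t := by
    intro f
    rw [Finset.sum_eq_sum_sdiff_singleton_add (Finset.mem_univ t₀) f]
    ring
  rw [hsplit fun t => (v t - Function.update (Yv b) t₀ 0 t) ^ 2,
      hsplit fun t => (v t - Yv b t) ^ 2]
  have heq : ∑ t ∈ Finset.univ \ {t₀}, (v t - Function.update (Yv b) t₀ 0 t) ^ 2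
      = ∑ t ∈ Finset.univ \ {t₀}, (v t - Yv b t) ^ 2 := by
    refine Finset.sum_congr rfl fun t ht => ?_
    rw [Finset.mem_sdiff, Finset.mem_singleton] at ht
    rw [Function.update_of_ne ht.2]
  rw [heq, Function.update_self]
  have hYt : Yv b t₀ = 1 := by simp [Yv, h]
  rw [hYt]
  ring

lemma Kc_update {m : ℕ} (b : Fin m → Bool) (t₀ : Fin m) (h : b t₀ = true) :
    Kc (Function.update b t₀ false) = Kc b - 1 := by
  have hfe : (Finset.univ.filter fun t => Function.update b t₀ false t = true)
      = (Finset.univ.filter fun t => b t = true).erase t₀ := by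
    ext t
    rw [Finset.mem_erase, Finset.mem_filter, Finset.mem_filter]
    constructor
    · intro ⟨_, ht⟩
      rcases eq_or_ne t t₀ with rfl | hne
      · rw [Function.update_self] at ht; exact absurd ht (by simp)
      · rw [Function.update_of_ne hne] at ht
        exact ⟨hne, Finset.mem_univ _, ht⟩
    · intro ⟨hne, _, ht⟩
      rw [Function.update_of_ne hne]
      exact ⟨Finset.mem_univ _, ht⟩
  unfold Kc
  rw [hfe, Finset.card_erase_of_mem]
  rw [Finset.mem_filter]
  exact ⟨Finset.mem_univ _, h⟩

lemma Kc_pos {m : ℕ} (b : Fin m → Bool) (t₀ : Fin m) (h : b t₀ = true) : 1 ≤ Kc b := by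
  refine Finset.card_pos.mpr ⟨t₀, ?_⟩
  rw [Finset.mem_filter]
  exact ⟨Finset.mem_univ _, h⟩

/-- Cauchy–Schwarz pick: some coordinate in `A` has `v t - 1/2` at most `ε√m/√|A|`. -/
lemma exists_small_coord {m : ℕ} (ε : ℝ) (hε : 0 ≤ ε) (A : Finset (Fin m)) (hA : A.Nonempty)
    (v : Fin m → ℝ) (hv : ∑ t, (v t - 1/2) ^ 2 ≤ ε ^ 2 * (m : ℝ)) :
    ∃ t₀ ∈ A, v t₀ - 1/2 ≤ ε * Real.sqrt m / Real.sqrt A.card := by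
  by_contra hcon
  push_neg at hcon
  set k := A.card with hk
  have hkpos : 0 < k := Finset.card_pos.mpr hA
  have hkR : (0:ℝ) < k := by exact_mod_cast hkpos
  set θ := ε * Real.sqrt m / Real.sqrt k with hθ
  have hθ0 : 0 ≤ θ := by
    apply div_nonneg (mul_nonneg hε (Real.sqrt_nonneg _)) (Real.sqrt_nonneg _)
  have hsum : (k : ℝ) * θ < ∑ t ∈ A, (v t - 1/2) := by
    calc (k : ℝ) * θ = ∑ _t ∈ A, θ := by rw [Finset.sum_const, hk]; ring
    _ < _ := Finset.sum_lt_sum_of_nonempty hA fun t ht => hcon t ht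
  have hCS : (∑ t ∈ A, (v t - 1/2)) ^ 2 ≤ (k:ℝ) * ∑ t ∈ A, (v t - 1/2) ^ 2 := by
    have := Finset.sum_mul_sq_le_sq_mul_sq A (fun _ => (1:ℝ)) (fun t => v t - 1/2)
    simpa [hk] using this
  have hsub : ∑ t ∈ A, (v t - 1/2) ^ 2 ≤ ∑ t, (v t - 1/2) ^ 2 :=
    Finset.sum_le_sum_of_subset_of_nonneg (Finset.subset_univ A) fun _ _ _ => sq_nonneg _
  have hθsq : θ ^ 2 = ε ^ 2 * m / k := by
    rw [hθ, div_pow, mul_pow, Real.sq_sqrt (Nat.cast_nonneg m), Real.sq_sqrt (Nat.cast_nonneg k)]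
  have h1 : ((k:ℝ) * θ) ^ 2 < (∑ t ∈ A, (v t - 1/2)) ^ 2 := by
    apply sq_lt_sq' _ hsum
    have : 0 ≤ (k:ℝ) * θ := mul_nonneg (le_of_lt hkR) hθ0
    linarith
  have h2 : ((k:ℝ) * θ) ^ 2 = (k:ℝ) * (ε ^ 2 * m) := by
    rw [mul_pow, hθsq]; field_simp
  nlinarith [mul_le_mul_of_nonneg_left (le_trans hsub hv) (le_of_lt hkR)]




lemma facts {m : ℕ} {p ε : ℝ} (hc : Cond1 m p ε) :
    0 < p ∧ p < 1/2 ∧ 0 < ε ∧ ε ≤ 0.07 ∧ 2*ε < 1/2 - p ∧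
    4 ≤ Real.sqrt m ∧ 3 / Real.sqrt m ≤ (1/2 - p)^2/2 - 2*ε*(1-ε) := by
  obtain ⟨hm, ⟨hp0, hpu⟩, hε0, hεu⟩ := hc
  have hM : (21:ℝ) ≤ (m:ℝ) := by exact_mod_cast hm
  have hM4 : 4 ≤ Real.sqrt m := by
    rw [show (4:ℝ) = Real.sqrt 16 by
      rw [show (16:ℝ) = 4^2 by norm_num, Real.sqrt_sq]; norm_num]
    exact Real.sqrt_le_sqrt (by linarith)
  have hsM : 0 < Real.sqrt m := by linarith
  obtain ⟨x, hxdef⟩ : ∃ x : ℝ, x = 2 / Real.sqrt m := ⟨_, rfl⟩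
  rw [← hxdef] at hpu hεu
  have hx0 : 0 < x := by rw [hxdef]; positivity
  have hx12 : x ≤ 1/2 := by
    rw [hxdef, div_le_iff₀ hsM]; linarith
  obtain ⟨δ, hδdef⟩ : ∃ d : ℝ, d = 1/2 - p := ⟨_, rfl⟩
  have hsqx : Real.sqrt (x * (1-x)) ≥ x := by
    calc Real.sqrt (x * (1-x)) ≥ Real.sqrt (x * x) :=
      Real.sqrt_le_sqrt (by nlinarith)
    _ = x := Real.sqrt_mul_self (le_of_lt hx0)
  have hδ2x : 2*x < δ := by
    have h0 : 2 * Real.sqrt (x*(1-x)) < δ := by rw [hδdef]; linarith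
    linarith
  have hδ0 : 0 < δ := by linarith
  have hδ12 : δ < 1/2 := by rw [hδdef]; linarith
  have h1δ : (0:ℝ) ≤ 1 - δ^2 := by nlinarith
  obtain ⟨s, hsdef⟩ : ∃ s : ℝ, s = Real.sqrt (1 - δ^2) := ⟨_, rfl⟩
  have hs0 : 0 ≤ s := by rw [hsdef]; exact Real.sqrt_nonneg _
  have hs1 : s ≤ 1 := by rw [hsdef]; exact Real.sqrt_le_one.mpr (by nlinarith)
  have hss : s^2 = 1 - δ^2 := by rw [hsdef]; exact Real.sq_sqrt h1δ
  have hs86 : 0.86 ≤ s := by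
    rw [hsdef]
    rw [show (0.86:ℝ) = Real.sqrt (0.86^2) by rw [Real.sqrt_sq]; norm_num]
    exact Real.sqrt_le_sqrt (by nlinarith)
  have hps : pstar p = 1/2 - δ/2 := by rw [hδdef]; unfold pstar; ring
  have hval : Real.sqrt (pstar p * (1 - pstar p)) = s/2 := by
    have h1 : pstar p * (1 - pstar p) = (s/2)^2 := by
      rw [hps]; rw [div_pow, hss]; ring
    rw [h1, Real.sqrt_sq (by positivity)]
  rw [hval] at hεu
  have hεe : ε < (1-s)/2 - x := by linarith
  have hε7 : ε ≤ 0.07 := by linarith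
  have hkey : ε*(1-ε) < δ^2/4 - x*s - x^2 := by
    have he1 : (1-s)/2 - x ≤ 1/2 := by linarith
    have hfac : 0 < ((1-s)/2 - x - ε) * (1 - ((1-s)/2 - x) - ε) :=
      mul_pos (by linarith) (by linarith)
    nlinarith [hfac, hss]
  have h2εδ : 2*ε < δ := by
    have p1 : δ*δ < δ*(1/2) := mul_lt_mul_of_pos_left hδ12 hδ0
    have p2 : ε*ε ≤ ε*0.07 := mul_le_mul_of_nonneg_left hε7 (le_of_lt hε0)
    have p3 : 0 ≤ x*s := mul_nonneg (le_of_lt hx0) hs0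
    have p4 : 0 ≤ x^2 := sq_nonneg x
    nlinarith [hkey, p1, p2, p3, p4]
  have hF4 : 3 / Real.sqrt m ≤ δ^2/2 - 2*ε*(1-ε) := by
    have hxs : 0.86 * x ≤ x * s := by nlinarith
    have h344 : (3:ℝ) / Real.sqrt m ≤ 1.72 * x := by
      rw [hxdef]
      rw [div_le_iff₀ hsM, mul_assoc, div_mul_cancel₀]
      · linarith
      · linarith
    nlinarith [sq_nonneg x]
  rw [← hδdef]
  exact ⟨hp0, by linarith, hε0, hε7, h2εδ, hM4, hF4⟩

/-- Core quadratic fact: h ≥ 1/2 - ε implies h² - 2εh ≥ 1/4 - 2ε + 3ε². -/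
lemma quadfact {h ε : ℝ} (hh : 1/2 - ε ≤ h) (hε7 : ε ≤ 0.07) (hε0 : 0 < ε) :
    1/4 - 2*ε + 3*ε^2 ≤ h^2 - 2*ε*h := by
  have h1 : 0 ≤ h - (1/2 - ε) := by linarith
  have h2 : 0 ≤ h + 1/2 - 3*ε := by linarith
  nlinarith [mul_nonneg h1 h2]

/-- A ∨ C : when r* is not a guaranteed sole winner, the truthful report is farther. -/
lemma lemAC {m : ℕ} {p ε : ℝ}
    (hp0 : 0 < p) (hp2 : p < 1/2) (hε0 : 0 < ε) (hε7 : ε ≤ 0.07)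
    (hM4 : 4 ≤ Real.sqrt m)
    (hF4 : 3 / Real.sqrt m ≤ (1/2 - p)^2/2 - 2*ε*(1-ε))
    (h2 g2 : ℝ) (hh2 : (1/2-ε)^2 ≤ h2)
    (hg2 : g2 = 2*h2 - 2*(pstar p)^2 + p^2) :
    Real.sqrt h2 + ε ≤ Real.sqrt g2 := by
  have hε12 : (0:ℝ) ≤ 1/2 - ε := by linarith
  have hh : 1/2 - ε ≤ Real.sqrt h2 := by
    rw [← Real.sqrt_sq hε12]
    exact Real.sqrt_le_sqrt hh2
  set h := Real.sqrt h2 with hhdef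
  have hsq : h^2 = h2 := Real.sq_sqrt (le_trans (sq_nonneg _) hh2)
  have hpos : 0 < 3 / Real.sqrt m := by positivity
  have hquad := quadfact hh hε7 hε0
  have hgoal : (h + ε)^2 ≤ g2 := by
    rw [hg2, ← hsq]
    unfold pstar
    nlinarith
  calc h + ε = Real.sqrt ((h+ε)^2) := (Real.sqrt_sq (by linarith)).symm
  _ ≤ Real.sqrt g2 := Real.sqrt_le_sqrt hgoal

/-- purely polynomial core of the descent step -/
lemma lemSTEPcore (p ε h c u D Mr : ℝ)
    (hε0 : 0 < ε) (hε7 : ε ≤ 0.07)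
    (hh : 1/2 - ε ≤ h) (hub : h ≤ 1)
    (hc0 : 0 < c) (hcu : c ≤ 2*ε*u)
    (hu0 : 0 < u) (hu14 : u ≤ 1/4) (huM : 1/Mr = u^2) (hM0 : 0 < Mr)
    (hD : D = 1/2 - p) (hD0 : 0 < D) (hD12 : D ≤ 1/2)
    (hF4 : 3*u ≤ D^2/2 - 2*ε*(1-ε)) :
    (h + 2*c + ε)^2 ≤ 2*h^2 - 1/4 + D^2/2 - 2*D/Mr := by
  have hquad : 1/4 - 2*ε + 3*ε^2 ≤ h^2 - 2*ε*h := by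
    have h1 : 0 ≤ h - (1/2 - ε) := by linarith
    have hA2 : 0 ≤ h + 1/2 - 3*ε := by linarith
    nlinarith [mul_nonneg h1 hA2]
  have hεu0 : (0:ℝ) ≤ ε*u := mul_nonneg (le_of_lt hε0) (le_of_lt hu0)
  have e1 : 4*h*c ≤ 8*(ε*u) := by nlinarith [hc0, hcu, hub, hh]
  have e6 : u^2 ≤ u/4 := by nlinarith [hu0, hu14]
  have e2c : ε^2 ≤ 0.07*ε := by nlinarith [hε0, hε7]
  have e2a : c^2 ≤ 4*(ε^2*u^2) := by
    nlinarith [mul_le_mul hcu hcu (le_of_lt hc0) (by nlinarith [hε0, hu0] : (0:ℝ) ≤ 2*ε*u)]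
  have e2b : ε^2*u^2 ≤ ε^2*(u/4) := mul_le_mul_of_nonneg_left e6 (sq_nonneg ε)
  have e2d : ε^2*u ≤ 0.07*ε*u := by
    have := mul_le_mul_of_nonneg_right e2c (le_of_lt hu0)
    linarith [this]
  have e2 : 4*c^2 ≤ 4*(ε*u) := by nlinarith [e2a, e2b, e2d, hu0, hε0]
  have e3 : 4*c*ε ≤ 8*(ε*u)*ε := by nlinarith [hcu, hε0]
  have e4 : 8*(ε*u)*ε ≤ 0.56*(ε*u) := by
    nlinarith [mul_le_mul_of_nonneg_left hε7 hεu0]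
  have e5 : 2*D/Mr ≤ u^2 := by
    rw [← huM]
    exact (div_le_div_iff_of_pos_right hM0).mpr (by linarith)
  have e7 : 8*(ε*u) + 4*(ε*u) ≤ 0.84*u := by
    nlinarith [hu0, mul_le_mul_of_nonneg_right hε7 (le_of_lt hu0)]
  nlinarith [hquad, hu0, hε0, hε7, e1, e2, e3, e4, e5, e6, e7, hF4]

/-- The descent step inequality. -/
lemma lemSTEP {m : ℕ} {p ε : ℝ} (kR : ℝ)
    (hp0 : 0 < p) (hp2 : p < 1/2) (hε0 : 0 < ε) (hε7 : ε ≤ 0.07)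
    (hM4 : 4 ≤ Real.sqrt m)
    (hF4 : 3 / Real.sqrt m ≤ (1/2 - p)^2/2 - 2*ε*(1-ε))
    (hk1 : 1 ≤ kR) (hkM : kR ≤ (m:ℝ))
    (h2 G c : ℝ) (hh2 : (1/2-ε)^2 ≤ h2)
    (hh2v : h2 = (pstar p)^2 + kR*(1/2-p)/(m:ℝ))
    (hGv : G = p^2 + 2*(kR-1)*(1/2-p)/(m:ℝ))
    (hcv : c = 2*ε/Real.sqrt (kR*(m:ℝ))) :
    Real.sqrt (h2 + c) + ε ≤ Real.sqrt G := by
  have hsM : 0 < Real.sqrt m := by linarith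
  have hMpos : (0:ℝ) < (m:ℝ) := Real.sqrt_pos.mp (by linarith)
  have hε12 : (0:ℝ) ≤ 1/2 - ε := by linarith
  have hh : 1/2 - ε ≤ Real.sqrt h2 := by
    rw [← Real.sqrt_sq hε12]
    exact Real.sqrt_le_sqrt hh2
  set h := Real.sqrt h2 with hhdef
  clear_value h
  have hsq : h^2 = h2 := by rw [hhdef]; exact Real.sq_sqrt (le_trans (sq_nonneg _) hh2)
  have hδ0 : (0:ℝ) < 1/2 - p := by linarith
  have hps : pstar p = 1/2 - (1/2-p)/2 := by unfold pstar; ring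
  -- h ≤ 1
  have hub : h ≤ 1 := by
    have h2ub : h2 ≤ 1 := by
      rw [hh2v, hps]
      have : kR*(1/2-p)/(m:ℝ) ≤ (1/2-p) := by
        rw [div_le_iff₀ hMpos]
        nlinarith
      nlinarith
    nlinarith [hsq, hh]
  -- bounds on c
  have hkM0 : (0:ℝ) < kR * (m:ℝ) := by nlinarith
  have hc0 : 0 < c := by rw [hcv]; positivity
  have hcle : c ≤ 2*ε/Real.sqrt m := by
    rw [hcv]
    apply div_le_div_of_nonneg_left (by linarith) hsM
    rw [show (m:ℝ) = 1 * (m:ℝ) by ring]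
    apply Real.sqrt_le_sqrt
    nlinarith
  obtain ⟨u, hudef⟩ : ∃ u : ℝ, u = 1 / Real.sqrt m := ⟨_, rfl⟩
  have hu0 : 0 < u := by rw [hudef]; positivity
  have hu14 : u ≤ 1/4 := by rw [hudef, div_le_iff₀ hsM]; linarith
  have hcu : c ≤ 2*ε*u := by
    rw [hudef]
    calc c ≤ 2*ε/Real.sqrt m := hcle
    _ = 2*ε*(1/Real.sqrt m) := by ring
  have huM : 1/(m:ℝ) = u^2 := by
    rw [hudef, div_pow, one_pow, Real.sq_sqrt (le_of_lt hMpos)]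
  have hF4' : 3*u ≤ (1/2-p)^2/2 - 2*ε*(1-ε) := by
    rw [hudef]
    calc (3:ℝ)*(1/Real.sqrt m) = 3/Real.sqrt m := by ring
    _ ≤ _ := hF4
  -- √(h2+c) ≤ h + 2c
  have hHle : Real.sqrt (h2 + c) ≤ h + 2*c := by
    rw [show h + 2*c = Real.sqrt ((h+2*c)^2) from (Real.sqrt_sq (by nlinarith)).symm]
    apply Real.sqrt_le_sqrt
    nlinarith [hsq, hh, hc0]
  have hGmain : (h + 2*c + ε)^2 ≤ G := by
    have hGv3 : G = 2*h^2 - 1/4 + (1/2-p)^2/2 - 2*(1/2-p)/(m:ℝ) := by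
      rw [hGv, hsq, hh2v]
      unfold pstar
      field_simp
      ring
    rw [hGv3]
    exact lemSTEPcore p ε h c u (1/2-p) (m:ℝ) hε0 hε7 hh hub hc0 hcu hu0 hu14
      (by rw [huM]) hMpos rfl (by linarith) (by linarith) hF4'
  have hG0 : (0:ℝ) ≤ h + 2*c + ε := by nlinarith [hh, hc0, hε0]
  calc Real.sqrt (h2 + c) + ε ≤ h + 2*c + ε := by linarith [hHle]
  _ = Real.sqrt ((h + 2*c + ε)^2) := (Real.sqrt_sq hG0).symm
  _ ≤ Real.sqrt G := Real.sqrt_le_sqrt hGmain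



-- ===================== Part 4: deterministic lemmas =====================

lemma approx_le {m : ℕ} {ε : ℝ} {r q : Fin m → ℝ} (hm : 0 < m)
    (h : ApproxTruthful ε r q) : Real.sqrt (sd r q) ≤ ε * Real.sqrt m := by
  unfold ApproxTruthful at h
  rw [l2norm_sub_eq] at h
  have hsM : 0 < Real.sqrt m := Real.sqrt_pos.mpr (by exact_mod_cast hm)
  rw [div_mul_eq_mul_div, one_mul, div_le_iff₀ hsM] at h
  linarith [h]

section Deterministic

variable {m n : ℕ} {p ε : ℝ}

/-- The per-outcome dominance: replacing the approximately-truthful report by the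
hedged report r* never decreases utility. -/
lemma dominance (hc : Cond1 m p ε) (i : Fin n) (ri : Fin m → ℝ)
    (hri : ApproxTruthful ε ri (fun _ => p)) (s : Fin n → Fin m → ℝ)
    (hs : ∀ j, j ≠ i → ApproxTruthful ε (s j) (fun _ => (1:ℝ)/2)) (b : Fin m → Bool) :
    utility i (Function.update s i ri) (Yv b)
      ≤ utility i (Function.update s i (fun _ => pstar p)) (Yv b) := by
  obtain ⟨hp0, hp2, hε0, hε7, h2εδ, hM4, hF4⟩ := facts hc
  have hsM : 0 < Real.sqrt m := by linarith
  have hM0 : (0:ℝ) < (m:ℝ) := Real.sqrt_pos.mp hsM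
  have hm0 : 0 < m := by exact_mod_cast hM0
  set M : ℝ := (m:ℝ) with hMdef
  set K : ℝ := ((Kc b : ℕ) : ℝ) with hKdef
  have hK0 : 0 ≤ K := by rw [hKdef]; positivity
  have hKm : K ≤ M := by rw [hKdef, hMdef]; exact_mod_cast Kc_le b
  set h2 : ℝ := (pstar p)^2 + K*(1/2-p)/M with hh2def
  set g2 : ℝ := p^2 + 2*K*(1/2-p)/M with hg2def
  have hsdstar : sd (fun _ => pstar p) (Yv b) = M * h2 := by
    rw [sd_const, hh2def, hKdef, hMdef]
    unfold pstar
    field_simp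
    ring
  have hsdp : sd (fun _ => p) (Yv b) = M * g2 := by
    rw [sd_const, hg2def, hKdef, hMdef]
    field_simp
  have hg20 : 0 ≤ g2 := by
    rw [hg2def]
    have h1 : 0 ≤ 2*K*(1/2-p)/M :=
      div_nonneg (by nlinarith [hK0]) (le_of_lt hM0)
    nlinarith [sq_nonneg p, h1]
  have hh20 : 0 ≤ h2 := by
    rw [hh2def]
    have h1 : 0 ≤ K*(1/2-p)/M :=
      div_nonneg (by nlinarith [hK0]) (le_of_lt hM0)
    nlinarith [sq_nonneg (pstar p), h1]
  -- distance bound for ri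
  have hriLow : Real.sqrt M * Real.sqrt g2 - ε * Real.sqrt M ≤ Real.sqrt (sd ri (Yv b)) := by
    have h1 := sqrt_sd_lower ri (fun _ => p) (Yv b)
    have h2' := approx_le hm0 hri
    have h3 : Real.sqrt (sd (fun _ => p) (Yv b)) = Real.sqrt M * Real.sqrt g2 := by
      rw [hsdp, Real.sqrt_mul (le_of_lt hM0)]
    rw [h3] at h1
    have h4 : Real.sqrt (sd ri (fun _ => p)) ≤ ε * Real.sqrt M := h2'
    linarith
  -- opponent lower bound
  have hopLow : ∀ j, j ≠ i → Real.sqrt M * (1/2 - ε) ≤ Real.sqrt (sd (s j) (Yv b)) := by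
    intro j hj
    have h1 := sqrt_sd_lower (s j) (fun _ => (1:ℝ)/2) (Yv b)
    have h2' := approx_le hm0 (hs j hj)
    have h3 : sd (fun _ => (1:ℝ)/2) (Yv b) = M * (1/4) := by
      rw [sd_const, hMdef]; ring
    have h4 : Real.sqrt (sd (fun _ => (1:ℝ)/2) (Yv b)) = Real.sqrt M * (1/2) := by
      rw [h3, Real.sqrt_mul (le_of_lt hM0),
        show (1:ℝ)/4 = (1/2)^2 by norm_num, Real.sqrt_sq (by norm_num)]
    rw [h4] at h1
    have h5 : Real.sqrt (sd (s j) (fun _ => (1:ℝ)/2)) ≤ ε * Real.sqrt M := h2'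
    nlinarith [h1, h5]
  by_cases hA : h2 < (1/2-ε)^2
  · -- r* wins outright
    have hU1 : utility i (Function.update s i (fun _ => pstar p)) (Yv b) = 1 := by
      apply utility_eq_one
      intro l hl
      rw [Function.update_self, Function.update_of_ne hl]
      have h1 : Real.sqrt (sd (fun _ => pstar p) (Yv b)) < Real.sqrt M * (1/2 - ε) := by
        rw [hsdstar]
        have : M * h2 < M * (1/2-ε)^2 := by
          exact mul_lt_mul_of_pos_left hA hM0
        calc Real.sqrt (M * h2) < Real.sqrt (M * (1/2-ε)^2) :=
          Real.sqrt_lt_sqrt (by positivity) this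
        _ = Real.sqrt M * (1/2 - ε) := by
          rw [Real.sqrt_mul (le_of_lt hM0), Real.sqrt_sq (by linarith)]
      exact lt_of_lt_of_le h1 (hopLow l hl)
    rw [hU1]
    exact utility_le_one _ _ _
  · -- r* weakly closer than ri
    apply utility_update_mono
    have hbig : (1/2-ε)^2 ≤ h2 := not_lt.mp hA
    have hACle : Real.sqrt h2 + ε ≤ Real.sqrt g2 := by
      apply lemAC hp0 hp2 hε0 hε7 hM4 hF4 h2 g2 hbig
      rw [hh2def, hg2def]
      unfold pstar
      field_simp
      ring
    have h1 : Real.sqrt (sd (fun _ => pstar p) (Yv b)) = Real.sqrt M * Real.sqrt h2 := by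
      rw [hsdstar, Real.sqrt_mul (le_of_lt hM0)]
    rw [h1]
    have h2le : Real.sqrt M * Real.sqrt h2 ≤ Real.sqrt M * Real.sqrt g2 - ε * Real.sqrt M := by
      nlinarith [mul_le_mul_of_nonneg_left hACle (le_of_lt hsM)]
    linarith [hriLow]

/-- The deterministic contradiction: utilities cannot be equal at every outcome. -/
lemma no_equal (hc : Cond1 m p ε) (hn : 2 ≤ n) (i : Fin n) (ri : Fin m → ℝ)
    (hri : ApproxTruthful ε ri (fun _ => p)) (s : Fin n → Fin m → ℝ)
    (hs : ∀ j, j ≠ i → ApproxTruthful ε (s j) (fun _ => (1:ℝ)/2))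
    (heq : ∀ b : Fin m → Bool, utility i (Function.update s i ri) (Yv b)
       = utility i (Function.update s i (fun _ => pstar p)) (Yv b)) : False := by
  obtain ⟨hp0, hp2, hε0, hε7, h2εδ, hM4, hF4⟩ := facts hc
  have hsM : 0 < Real.sqrt m := by linarith
  have hM0 : (0:ℝ) < (m:ℝ) := Real.sqrt_pos.mp hsM
  have hm0 : 0 < m := by exact_mod_cast hM0
  set M : ℝ := (m:ℝ) with hMdef
  set h2k : ℕ → ℝ := fun k => (pstar p)^2 + (k:ℝ)*(1/2-p)/M with hh2kdef
  set g2k : ℕ → ℝ := fun k => p^2 + 2*(k:ℝ)*(1/2-p)/M with hg2kdef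
  have hsdstar : ∀ b : Fin m → Bool, sd (fun _ => pstar p) (Yv b) = M * h2k (Kc b) := by
    intro b
    rw [sd_const, hh2kdef, hMdef]
    unfold pstar
    field_simp
    ring
  have hsdp : ∀ b : Fin m → Bool, sd (fun _ => p) (Yv b) = M * g2k (Kc b) := by
    intro b
    rw [sd_const, hg2kdef, hMdef]
    field_simp
  have hg2k0 : ∀ k : ℕ, 0 ≤ g2k k := by
    intro k
    simp only [hg2kdef]
    have h1 : 0 ≤ 2*(k:ℝ)*(1/2-p)/M :=
      div_nonneg (by nlinarith [Nat.cast_nonneg (α := ℝ) k]) (le_of_lt hM0)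
    nlinarith [sq_nonneg p, h1]
  have hriLow : ∀ b : Fin m → Bool,
      Real.sqrt M * Real.sqrt (g2k (Kc b)) - ε * Real.sqrt M ≤ Real.sqrt (sd ri (Yv b)) := by
    intro b
    have h1 := sqrt_sd_lower ri (fun _ => p) (Yv b)
    have h2' := approx_le hm0 hri
    have h3 : Real.sqrt (sd (fun _ => p) (Yv b)) = Real.sqrt M * Real.sqrt (g2k (Kc b)) := by
      rw [hsdp b, Real.sqrt_mul (le_of_lt hM0)]
    rw [h3] at h1
    linarith [h1, h2']
  have hopLow : ∀ j, j ≠ i → ∀ b : Fin m → Bool,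
      Real.sqrt M * (1/2 - ε) ≤ Real.sqrt (sd (s j) (Yv b)) := by
    intro j hj b
    have h1 := sqrt_sd_lower (s j) (fun _ => (1:ℝ)/2) (Yv b)
    have h2' := approx_le hm0 (hs j hj)
    have h3 : sd (fun _ => (1:ℝ)/2) (Yv b) = M * (1/4) := by
      rw [sd_const, hMdef]; ring
    have h4 : Real.sqrt (sd (fun _ => (1:ℝ)/2) (Yv b)) = Real.sqrt M * (1/2) := by
      rw [h3, Real.sqrt_mul (le_of_lt hM0),
        show (1:ℝ)/4 = (1/2)^2 by norm_num, Real.sqrt_sq (by norm_num)]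
    rw [h4] at h1
    nlinarith [h1, h2']
  have hopUp : ∀ j, j ≠ i → ∀ b : Fin m → Bool,
      Real.sqrt (sd (s j) (Yv b)) ≤ Real.sqrt M * (1/2 + ε) := by
    intro j hj b
    have h1 := sqrt_sd_triangle (s j) (fun _ => (1:ℝ)/2) (Yv b)
    have h2' := approx_le hm0 (hs j hj)
    have h3 : sd (fun _ => (1:ℝ)/2) (Yv b) = M * (1/4) := by
      rw [sd_const, hMdef]; ring
    have h4 : Real.sqrt (sd (fun _ => (1:ℝ)/2) (Yv b)) = Real.sqrt M * (1/2) := by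
      rw [h3, Real.sqrt_mul (le_of_lt hM0),
        show (1:ℝ)/4 = (1/2)^2 by norm_num, Real.sqrt_sq (by norm_num)]
    rw [h4] at h1
    nlinarith [h1, h2']
  -- no outcome is a gain point
  have noGain : ∀ b : Fin m → Bool,
      (∀ j, j ≠ i → M * h2k (Kc b) < sd (s j) (Yv b)) →
      (∃ j, j ≠ i ∧ sd (s j) (Yv b) ≤ sd ri (Yv b)) → False := by
    rintro b hwin ⟨j, hj, hle⟩
    have hU1 : utility i (Function.update s i (fun _ => pstar p)) (Yv b) = 1 := by
      apply utility_eq_one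
      intro l hl
      rw [Function.update_self, Function.update_of_ne hl]
      have h0 : 0 ≤ sd (fun _ => pstar p) (Yv b) := sd_nonneg _ _
      apply Real.sqrt_lt_sqrt h0
      rw [hsdstar b]
      exact hwin l hl
    have hU2 : utility i (Function.update s i ri) (Yv b) ≤ 1/2 := by
      apply utility_le_half i j _ _ hj
      rw [Function.update_self, Function.update_of_ne hj]
      exact Real.sqrt_le_sqrt hle
    rw [heq b, hU1] at hU2
    linarith
  -- the descent
  have descend : ∀ k : ℕ, ∀ b : Fin m → Bool, Kc b = k →
      (∃ j, j ≠ i ∧ sd (s j) (Yv b) ≤ M * h2k k) → False := by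
    intro k
    induction k using Nat.strong_induction_on with
    | _ k IH =>
      rintro b hKb ⟨j, hj, hd⟩
      by_cases hsmall : h2k k < (1/2-ε)^2
      · have h1 := hopLow j hj b
        have h0 : (0:ℝ) ≤ Real.sqrt M * (1/2 - ε) := by
          apply mul_nonneg (Real.sqrt_nonneg _); linarith
        have h2 : M * (1/2-ε)^2 ≤ sd (s j) (Yv b) := by
          have hsq1 := mul_self_le_mul_self h0 h1
          nlinarith [hsq1, Real.sq_sqrt (sd_nonneg (s j) (Yv b)),
            Real.sq_sqrt (show (0:ℝ) ≤ M from le_of_lt hM0)]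
        have h3 : M * h2k k < M * (1/2-ε)^2 := mul_lt_mul_of_pos_left hsmall hM0
        exact absurd (lt_of_le_of_lt (h2.trans hd) h3) (lt_irrefl _)
      · have hbig : (1/2-ε)^2 ≤ h2k k := not_lt.mp hsmall
        have hk1 : 1 ≤ k := by
          by_contra hk0
          push_neg at hk0
          interval_cases k
          have : h2k 0 = (pstar p)^2 := by rw [hh2kdef]; simp
          rw [this] at hbig
          have hps : pstar p = 1/4 + p/2 := by unfold pstar; ring
          nlinarith [hbig]
        have hkm : k ≤ m := by rw [← hKb]; exact Kc_le b
        -- pick a coordinate to flip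
        have hANe : (Finset.univ.filter fun t => b t = true).Nonempty := by
          rw [← Finset.card_pos]
          show 0 < Kc b
          omega
        have hsjc : ∑ t, (s j t - 1/2)^2 ≤ ε^2 * M := by
          have h2' := approx_le hm0 (hs j hj)
          have h0 : (0:ℝ) ≤ ε * Real.sqrt M := by positivity
          have h1 : sd (s j) (fun _ => (1:ℝ)/2) ≤ (ε * Real.sqrt M)^2 := by
            nlinarith [Real.sq_sqrt (sd_nonneg (s j) (fun _ => (1:ℝ)/2)),
              Real.sqrt_nonneg (sd (s j) (fun _ => (1:ℝ)/2))]
          have h2'' : (ε * Real.sqrt M)^2 = ε^2 * M := by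
            rw [mul_pow, Real.sq_sqrt (le_of_lt hM0)]
          rw [h2''] at h1
          exact h1
        obtain ⟨t₀, ht₀A, hco⟩ := exists_small_coord ε (le_of_lt hε0) _ hANe (s j) hsjc
        have hbt₀ : b t₀ = true := (Finset.mem_filter.mp ht₀A).2
        have hcard : (Finset.univ.filter fun t => b t = true).card = k := hKb
        rw [hcard] at hco
        set b' := Function.update b t₀ false with hb'def
        have hK' : Kc b' = k - 1 := by rw [hb'def, Kc_update b t₀ hbt₀, hKb]
        have hkR1 : (1:ℝ) ≤ (k:ℝ) := by exact_mod_cast hk1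
        have hkRM : (k:ℝ) ≤ M := by rw [hMdef]; exact_mod_cast hkm
        have hsk : 0 < Real.sqrt (k:ℝ) := Real.sqrt_pos.mpr (by linarith)
        set c : ℝ := 2*ε/Real.sqrt ((k:ℝ)*M) with hcdef
        have hq : Real.sqrt M/Real.sqrt (k:ℝ) = M / Real.sqrt ((k:ℝ)*M) := by
          rw [Real.sqrt_mul (by linarith : (0:ℝ) ≤ (k:ℝ)),
            div_eq_div_iff (ne_of_gt hsk) (ne_of_gt (mul_pos hsk hsM))]
          rw [show Real.sqrt M * (Real.sqrt (k:ℝ) * Real.sqrt M)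
              = (Real.sqrt M * Real.sqrt M) * Real.sqrt (k:ℝ) from by ring,
            Real.mul_self_sqrt (le_of_lt hM0)]
        have hMc : M * c = 2*ε*Real.sqrt M/Real.sqrt (k:ℝ) := by
          rw [hcdef]
          calc M * (2*ε/Real.sqrt ((k:ℝ)*M)) = 2*ε*(M/Real.sqrt ((k:ℝ)*M)) := by ring
          _ = 2*ε*(Real.sqrt M/Real.sqrt (k:ℝ)) := by rw [← hq]
          _ = 2*ε*Real.sqrt M/Real.sqrt (k:ℝ) := by ring
        have hsd' : sd (s j) (Yv b') ≤ M * (h2k k + c) := by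
          rw [hb'def, sd_flip (s j) b t₀ hbt₀]
          have : 2 * s j t₀ - 1 ≤ M * c := by
            rw [hMc]
            have h9 := hco
            rw [le_div_iff₀ hsk] at h9 ⊢
            linarith
          linarith [hd, this]
        -- the step inequality
        have hstep : Real.sqrt (h2k k + c) + ε ≤ Real.sqrt (g2k (k-1)) := by
          apply lemSTEP (k:ℝ) hp0 hp2 hε0 hε7 hM4 hF4 hkR1 hkRM (h2k k) (g2k (k-1)) c hbig
          · simp only [hh2kdef, hMdef]
          · simp only [hg2kdef, hMdef]
            rw [Nat.cast_sub hk1]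
            ring
          · simp only [hcdef, hMdef]
        -- conclude blocking at k-1
        have hblocked : sd (s j) (Yv b') ≤ sd ri (Yv b') := by
          have e1 : Real.sqrt (sd (s j) (Yv b'))
              ≤ Real.sqrt M * Real.sqrt (h2k k + c) := by
            calc Real.sqrt (sd (s j) (Yv b')) ≤ Real.sqrt (M * (h2k k + c)) :=
              Real.sqrt_le_sqrt hsd'
            _ = _ := Real.sqrt_mul (le_of_lt hM0) _
          have e2 : Real.sqrt M * Real.sqrt (h2k k + c)
              ≤ Real.sqrt M * Real.sqrt (g2k (k-1)) - ε * Real.sqrt M := by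
            nlinarith [mul_le_mul_of_nonneg_left hstep (le_of_lt hsM)]
          have e3 := hriLow b'
          rw [hK'] at e3
          have e4 : Real.sqrt (sd (s j) (Yv b')) ≤ Real.sqrt (sd ri (Yv b')) := by
            linarith
          exact (Real.sqrt_le_sqrt_iff (sd_nonneg _ _)).mp e4
        have hnext : ∃ j', j' ≠ i ∧ sd (s j') (Yv b') ≤ M * h2k (k-1) := by
          by_contra hcon
          push_neg at hcon
          apply noGain b'
          · intro j' hj'
            rw [hK']
            exact hcon j' hj'
          · exact ⟨j, hj, hblocked⟩
        exact IH (k-1) (by omega) b' hK' hnext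
  -- base case : the all-ones outcome
  set b₂ : Fin m → Bool := fun _ => true with hb₂def
  have hK2 : Kc b₂ = m := by
    rw [hb₂def]
    unfold Kc
    simp
  have hg2m : g2k m = (1-p)^2 := by
    rw [hg2kdef, hMdef]
    field_simp
    ring
  have hriFar : Real.sqrt M * (1/2 + ε) < Real.sqrt (sd ri (Yv b₂)) := by
    have h1 := hriLow b₂
    rw [hK2, hg2m, Real.sqrt_sq (by linarith : (0:ℝ) ≤ 1-p)] at h1
    nlinarith [h1, hsM]
  obtain ⟨j0, hj0⟩ : ∃ j0 : Fin n, j0 ≠ i := by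
    apply Fintype.exists_ne_of_one_lt_card
    rw [Fintype.card_fin]
    omega
  have hbase : ∃ j', j' ≠ i ∧ sd (s j') (Yv b₂) ≤ M * h2k m := by
    by_contra hcon
    push_neg at hcon
    apply noGain b₂
    · intro j' hj'
      rw [hK2]
      exact hcon j' hj'
    · refine ⟨j0, hj0, ?_⟩
      have h1 := hopUp j0 hj0 b₂
      have h2 : Real.sqrt (sd (s j0) (Yv b₂)) ≤ Real.sqrt (sd ri (Yv b₂)) := by
        linarith [hriFar]
      exact (Real.sqrt_le_sqrt_iff (sd_nonneg _ _)).mp h2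
  exact descend m b₂ hK2 hbase

end Deterministic

end HedgeAux

/-- **Theorem 1 (hedging strictly dominates truthful reporting).** Under Condition 1,
let `r_i` be any ε-ℓ² approximately truthful report w.r.t. `p̄ = (p,…,p)`, and let `σ` be
any distribution over opponents' report profiles under which, almost surely, every report
`r_j` with `j ≠ i` lies in `[0,1]^m` and is ε-ℓ² approximately truthful w.r.t.
`c = (1/2,…,1/2)`.  With the outcome vector `Y ∈ {0,1}^m` having independent Bernoulli(p)
coordinates, independent of `σ` (so that expectations factor into the displayed sums over
binary outcomes), forecaster `i`'s expected utility from `r_i` is strictly less than her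
expected utility from hedging to `r* = (p*,…,p*)`. -/
theorem hedging_strictly_dominates (m n : ℕ) (p ε : ℝ) (hcond : Cond1 m p ε) (hn : 2 ≤ n)
    (i : Fin n) (ri : Fin m → ℝ)
    (hriRange : ∀ t, ri t ∈ Set.Icc (0 : ℝ) 1)
    (hri : ApproxTruthful ε ri (fun _ => p))
    (σ : Measure (Fin n → Fin m → ℝ)) [IsProbabilityMeasure σ]
    (hσ : ∀ᵐ s ∂σ, ∀ j, j ≠ i →
      (∀ t, s j t ∈ Set.Icc (0 : ℝ) 1) ∧ ApproxTruthful ε (s j) (fun _ => 1 / 2))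
    (hInt : ∀ q y : Fin m → ℝ,
      Integrable (fun s => utility i (Function.update s i q) y) σ) :
    ∑ b : Fin m → Bool, (∏ t, if b t then p else 1 - p) *
        ∫ s, utility i (Function.update s i ri) (fun t => if b t then 1 else 0) ∂σ
      < ∑ b : Fin m → Bool, (∏ t, if b t then p else 1 - p) *
          ∫ s, utility i (Function.update s i fun _ => pstar p)
            (fun t => if b t then 1 else 0) ∂σ := by
  have hfacts := HedgeAux.facts hcond
  obtain ⟨hp0, hp2, hε0, hε7, -, -, -⟩ := hfacts
  set F : (Fin m → Bool) → (Fin n → Fin m → ℝ) → ℝ :=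
    fun b s => utility i (Function.update s i ri) (HedgeAux.Yv b) with hFdef
  set G : (Fin m → Bool) → (Fin n → Fin m → ℝ) → ℝ :=
    fun b s => utility i (Function.update s i fun _ => pstar p) (HedgeAux.Yv b) with hGdef
  have hIntF : ∀ b, Integrable (F b) σ := fun b => hInt ri (HedgeAux.Yv b)
  have hIntG : ∀ b, Integrable (G b) σ := fun b => hInt (fun _ => pstar p) (HedgeAux.Yv b)
  have hdom : ∀ b, F b ≤ᶠ[MeasureTheory.ae σ] G b := by
    intro b
    filter_upwards [hσ] with s hs
    exact HedgeAux.dominance hcond i ri hri s (fun j hj => (hs j hj).2) b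
  have hle : ∀ b, ∫ s, F b s ∂σ ≤ ∫ s, G b s ∂σ := fun b =>
    integral_mono_ae (hIntF b) (hIntG b) (hdom b)
  have hex : ∃ b, ∫ s, F b s ∂σ < ∫ s, G b s ∂σ := by
    by_contra hcon
    push_neg at hcon
    have heqI : ∀ b, ∫ s, F b s ∂σ = ∫ s, G b s ∂σ := fun b =>
      le_antisymm (hle b) (hcon b)
    have haeeq : ∀ b, ∀ᵐ s ∂σ, F b s = G b s := by
      intro b
      have h0 : 0 ≤ᶠ[MeasureTheory.ae σ] fun s => G b s - F b s := by
        filter_upwards [hdom b] with s h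
        simpa using sub_nonneg.mpr h
      have hI : Integrable (fun s => G b s - F b s) σ := (hIntG b).sub (hIntF b)
      have hz : ∫ s, (G b s - F b s) ∂σ = 0 := by
        rw [integral_sub (hIntG b) (hIntF b), heqI b]
        ring
      have hae := (integral_eq_zero_iff_of_nonneg_ae h0 hI).mp hz
      filter_upwards [hae] with s h
      have h' : G b s - F b s = 0 := h
      linarith
    have hall : ∀ᵐ s ∂σ, (∀ j, j ≠ i →
        (∀ t, s j t ∈ Set.Icc (0 : ℝ) 1) ∧ ApproxTruthful ε (s j) (fun _ => 1 / 2))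
        ∧ ∀ b, F b s = G b s := hσ.and (ae_all_iff.mpr haeeq)
    haveI : (MeasureTheory.ae σ).NeBot := ae_neBot.mpr (IsProbabilityMeasure.ne_zero σ)
    obtain ⟨s0, hs0⟩ := hall.exists
    exact HedgeAux.no_equal hcond hn i ri hri s0 (fun j hj => (hs0.1 j hj).2)
      (fun b => hs0.2 b)
  obtain ⟨b0, hb0⟩ := hex
  have hw : ∀ b : Fin m → Bool, 0 < ∏ t, if b t then p else 1 - p := by
    intro b
    apply Finset.prod_pos
    intro t _
    by_cases hbt : b t
    · rw [if_pos hbt]; exact hp0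
    · rw [if_neg hbt]; linarith
  apply Finset.sum_lt_sum
  · intro b _
    exact mul_le_mul_of_nonneg_left (hle b) (le_of_lt (hw b))
  · exact ⟨b0, Finset.mem_univ _, mul_lt_mul_of_pos_left hb0 (hw b0)⟩

end
end

section
/- Let (R, Y) be a random pair with R ∈ [0,1] and Y ∈ {0,1}, and set p = E[Y]. Let G : ℝ → ℝ be (β, α, ε)-approximately affine with β > 0, and define Ū(r) = E[G(S(r, Y) − S(R, Y))] for r ∈ [0,1], where S(r,y) = 1 − (r − y)². Then Ū(p) − Ū(r) ≥ β·(p − r)² − 2ε for every r ∈ [0,1]; in particular, every r ∈ [0,1] with |r − p| > √(2ε/β) satisfies Ū(p) > Ū(r), i.e., any report deviating from the belief p by more than γ = √(2ε/β) is strictly dominated by reporting p. -/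
open MeasureTheory

noncomputable section

/-- The quadratic score `S(r, y) = 1 − (r − y)²`. -/
def scoreS (r y : ℝ) : ℝ := 1 - (r - y) ^ 2

/-- `F` is `(β, α, ε)`-approximately affine when `|F(x) − (βx + α)| ≤ ε` on `[−1, 1]`. -/
def ApproxAffine (F : ℝ → ℝ) (β α ε : ℝ) : Prop :=
  ∀ x ∈ Set.Icc (-1 : ℝ) 1, |F x - (β * x + α)| ≤ ε

/-- **Approximate affineness implies approximate truthfulness (Lemma 4).** Let `(R, Y)` be a
random pair with `R ∈ [0,1]` and `Y ∈ {0,1}`, let `p = E[Y]`, let `G` be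
`(β, α, ε)`-approximately affine with `β > 0`, and let
`Ū(r) = E[G(S(r, Y) − S(R, Y))]`.  Then `Ū(p) − Ū(r) ≥ β (p − r)² − 2ε` for every
`r ∈ [0,1]`; in particular, every `r ∈ [0,1]` with `|r − p| > √(2ε/β)` satisfies
`Ū(p) > Ū(r)`, i.e. any report deviating from the belief `p` by more than `γ = √(2ε/β)`
is strictly dominated by reporting `p`. -/
theorem approx_affine_implies_approx_truthful {Ω : Type*} [MeasurableSpace Ω]
    (μ : Measure Ω) [IsProbabilityMeasure μ]
    (R Y : Ω → ℝ) (hRmeas : Measurable R) (hYmeas : Measurable Y)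
    (hRval : ∀ ω, R ω ∈ Set.Icc (0 : ℝ) 1) (hYval : ∀ ω, Y ω = 0 ∨ Y ω = 1)
    (p : ℝ) (hp : p = ∫ ω, Y ω ∂μ)
    (G : ℝ → ℝ) (hGmeas : Measurable G)
    (β α ε : ℝ) (hβ : 0 < β) (haff : ApproxAffine G β α ε) :
    (∀ r ∈ Set.Icc (0 : ℝ) 1,
      (∫ ω, G (scoreS p (Y ω) - scoreS (R ω) (Y ω)) ∂μ) -
          (∫ ω, G (scoreS r (Y ω) - scoreS (R ω) (Y ω)) ∂μ)
        ≥ β * (p - r) ^ 2 - 2 * ε) ∧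
    (∀ r ∈ Set.Icc (0 : ℝ) 1, |r - p| > Real.sqrt (2 * ε / β) →
      (∫ ω, G (scoreS r (Y ω) - scoreS (R ω) (Y ω)) ∂μ) <
        (∫ ω, G (scoreS p (Y ω) - scoreS (R ω) (Y ω)) ∂μ)) := by
  have hε : 0 ≤ ε := le_trans (abs_nonneg _) (haff 0 (by norm_num))
  have hYb : ∀ ω, Y ω ∈ Set.Icc (0 : ℝ) 1 := by
    intro ω; rcases hYval ω with h | h <;> simp [h]
  have hYint : Integrable Y μ := by
    refine ⟨hYmeas.aestronglyMeasurable, ?_⟩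
    apply HasFiniteIntegral.of_bounded (C := 1)
    filter_upwards with ω
    rw [Real.norm_eq_abs, abs_le]
    exact ⟨by linarith [(hYb ω).1], (hYb ω).2⟩
  have hp0 : 0 ≤ p := by
    rw [hp]; exact integral_nonneg fun ω => (hYb ω).1
  have hp1 : p ≤ 1 := by
    rw [hp]
    calc ∫ ω, Y ω ∂μ ≤ ∫ _ω, (1 : ℝ) ∂μ :=
          integral_mono hYint (integrable_const _) fun ω => (hYb ω).2
      _ = 1 := by simp
  have hpmem : p ∈ Set.Icc (0 : ℝ) 1 := ⟨hp0, hp1⟩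
  have hmem : ∀ r, r ∈ Set.Icc (0 : ℝ) 1 → ∀ ω,
      scoreS r (Y ω) - scoreS (R ω) (Y ω) ∈ Set.Icc (-1 : ℝ) 1 := by
    intro r hr ω
    obtain ⟨hr0, hr1⟩ := hr
    obtain ⟨hR0, hR1⟩ := hRval ω
    rcases hYval ω with h | h <;>
      simp only [scoreS, h, Set.mem_Icc] <;> constructor <;> nlinarith
  have hint : ∀ r, r ∈ Set.Icc (0 : ℝ) 1 →
      Integrable (fun ω => G (scoreS r (Y ω) - scoreS (R ω) (Y ω))) μ := by
    intro r hr
    have hm : Measurable fun ω => scoreS r (Y ω) - scoreS (R ω) (Y ω) := by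
      unfold scoreS; fun_prop
    refine ⟨(hGmeas.comp hm).aestronglyMeasurable, ?_⟩
    apply HasFiniteIntegral.of_bounded (C := ε + β + |α|)
    filter_upwards with ω
    rw [Real.norm_eq_abs]
    set x := scoreS r (Y ω) - scoreS (R ω) (Y ω) with hx
    have hxmem := hmem r hr ω
    have h1 := haff x hxmem
    have h2 : |β * x + α| ≤ β + |α| := by
      calc |β * x + α| ≤ |β * x| + |α| := abs_add_le _ _
        _ = β * |x| + |α| := by rw [abs_mul, abs_of_pos hβ]
        _ ≤ β + |α| := by
            have hxle : |x| ≤ 1 := abs_le.mpr ⟨hxmem.1, hxmem.2⟩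
            nlinarith
    calc |G x| = |(G x - (β * x + α)) + (β * x + α)| := by ring_nf
      _ ≤ |G x - (β * x + α)| + |β * x + α| := abs_add_le _ _
      _ ≤ ε + (β + |α|) := add_le_add h1 h2
      _ = ε + β + |α| := by ring
  have main : ∀ r ∈ Set.Icc (0 : ℝ) 1,
      (∫ ω, G (scoreS p (Y ω) - scoreS (R ω) (Y ω)) ∂μ) -
          (∫ ω, G (scoreS r (Y ω) - scoreS (R ω) (Y ω)) ∂μ)
        ≥ β * (p - r) ^ 2 - 2 * ε := by
    intro r hr
    have h1 := hint p hpmem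
    have h2 := hint r hr
    have hg1 : Integrable (fun ω => (r ^ 2 - p ^ 2) + 2 * (p - r) * Y ω) μ :=
      (integrable_const _).add (hYint.const_mul _)
    have hg2 : Integrable (fun ω => β * ((r ^ 2 - p ^ 2) + 2 * (p - r) * Y ω)) μ :=
      hg1.const_mul β
    have hgint : Integrable
        (fun ω => β * ((r ^ 2 - p ^ 2) + 2 * (p - r) * Y ω) - 2 * ε) μ :=
      hg2.sub (integrable_const _)
    have hkey : ∀ ω, β * ((r ^ 2 - p ^ 2) + 2 * (p - r) * Y ω) - 2 * ε ≤
        G (scoreS p (Y ω) - scoreS (R ω) (Y ω)) -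
          G (scoreS r (Y ω) - scoreS (R ω) (Y ω)) := by
      intro ω
      set x := scoreS p (Y ω) - scoreS (R ω) (Y ω) with hxdef
      set y := scoreS r (Y ω) - scoreS (R ω) (Y ω) with hydef
      have ha := abs_le.mp (haff x (hmem p hpmem ω))
      have hb := abs_le.mp (haff y (hmem r hr ω))
      have hΔ : x - y = (r ^ 2 - p ^ 2) + 2 * (p - r) * Y ω := by
        rw [hxdef, hydef]; simp only [scoreS]; ring
      have hΔ' : β * x - β * y = β * ((r ^ 2 - p ^ 2) + 2 * (p - r) * Y ω) := by
        rw [show β * x - β * y = β * (x - y) from by ring, hΔ]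
      linarith [ha.1, hb.2]
    calc β * (p - r) ^ 2 - 2 * ε
        = ∫ ω, (β * ((r ^ 2 - p ^ 2) + 2 * (p - r) * Y ω) - 2 * ε) ∂μ := by
          rw [integral_sub hg2 (integrable_const _),
            integral_const_mul, integral_add (integrable_const _) (hYint.const_mul _),
            integral_const_mul]
          simp only [integral_const, measure_univ, probReal_univ, ENNReal.toReal_one, one_smul,
            smul_eq_mul, one_mul]
          rw [← hp]; ring
      _ ≤ ∫ ω, (G (scoreS p (Y ω) - scoreS (R ω) (Y ω)) -
            G (scoreS r (Y ω) - scoreS (R ω) (Y ω))) ∂μ :=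
          integral_mono hgint (h1.sub h2) hkey
      _ = _ := integral_sub h1 h2
  refine ⟨main, fun r hr hγ => ?_⟩
  have h2εβ : 0 ≤ 2 * ε / β := div_nonneg (by linarith) hβ.le
  have hs := Real.sq_sqrt h2εβ
  have hsn := Real.sqrt_nonneg (2 * ε / β)
  have hsq : 2 * ε / β < (r - p) ^ 2 := by
    nlinarith [sq_abs (r - p), hγ]
  rw [div_lt_iff₀ hβ] at hsq
  have hpos : 0 < β * (p - r) ^ 2 - 2 * ε := by nlinarith
  linarith [main r hr]

end
end
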